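/- For each process Π' of the original theory ⟨D,W⟩, there exists a successful and closed process Π of the simulating normal theory ⟨D_u^F, W_u⟩ with O(Π) = Π'. Consequently every extension of ⟨D,W⟩ (under the simulated regular semantics) is var-equivalent with respect to X to an extension of ⟨D_u^F, W_u⟩. -/

import Mathlib

set_option linter.unusedVariables false


namespace DLogic

/-- Propositional formulas over countably many variables. -/
inductive PForm : Type
  | var : ℕ → PForm
  | fls : PForm
  | imp : PForm → PForm → PForm
  deriving DecidableEq

namespace PForm

/-- Negation. -/
def neg (φ : PForm) : PForm := imp φ fls

/-- Truth. -/
def tru : PForm := imp fls fls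

/-- Conjunction. -/
def andF (φ ψ : PForm) : PForm := neg (imp φ (neg ψ))

/-- Disjunction. -/
def orF (φ ψ : PForm) : PForm := imp (neg φ) ψ

/-- Evaluation of a formula under a valuation. -/
def eval (v : ℕ → Bool) : PForm → Bool
  | var n => v n
  | fls => false
  | imp a b => !(eval v a) || eval v b

/-- Substitution of formulas for variables. -/
def subst (f : ℕ → PForm) : PForm → PForm
  | var n => f n
  | fls => fls
  | imp a b => imp (subst f a) (subst f b)

/-- Renaming of variables. -/
def rename (σ : ℕ → ℕ) (φ : PForm) : PForm := subst (fun n => var (σ n)) φ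

/-- The variables occurring in a formula. -/
def vars : PForm → Finset ℕ
  | var n => {n}
  | fls => ∅
  | imp a b => vars a ∪ vars b

/-- The size of a formula. -/
def size : PForm → ℕ
  | var _ => 1
  | fls => 1
  | imp a b => size a + size b + 1

end PForm

/-- A propositional theory is a set of formulas. -/
abbrev Th : Type := Set PForm

/-- A valuation is a model of a theory. -/
def Models (v : ℕ → Bool) (Γ : Th) : Prop := ∀ φ ∈ Γ, φ.eval v = true

/-- A theory is consistent if it has a model. -/
def ThConsistent (Γ : Th) : Prop := ∃ v, Models v Γ

/-- Semantic entailment. -/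
def ThEntails (Γ : Th) (φ : PForm) : Prop := ∀ v, Models v Γ → φ.eval v = true

/-- Deductive closure. -/
def Cn (Γ : Th) : Th := {φ | ThEntails Γ φ}

/-- A default rule: precondition, justification, consequence. -/
structure Default : Type where
  prec : PForm
  just : PForm
  cons : PForm
  deriving DecidableEq

/-- A normal default has its justification equal to its consequence. -/
def Default.IsNormal (d : Default) : Prop := d.just = d.cons

/-- The set of formulas of a background theory given as a list. -/
def WSet (W : List PForm) : Th := {φ | φ ∈ W}

/-- The theory consisting of `W` together with the consequences of the defaults in `Pr`. -/
def procTh (W : List PForm) (Pr : List Default) : Th :=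
  {φ | φ ∈ W ∨ ∃ d ∈ Pr, d.cons = φ}

/-- `Pr` is a process of the default theory `⟨D, W⟩`: a sequence of distinct defaults of `D`
whose consequences are jointly consistent with `W`, each of whose preconditions is entailed by
`W` plus the consequences of the preceding defaults. -/
def IsProcess (D : List Default) (W : List PForm) (Pr : List Default) : Prop :=
  Pr.Nodup ∧ (∀ d ∈ Pr, d ∈ D) ∧ ThConsistent (procTh W Pr) ∧
    ∀ i : Fin Pr.length, ThEntails (procTh W (Pr.take i.1)) (Pr.get i).prec

/-- Local (Reiter-style) successfulness: the justification of every applied default is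
consistent with `W` plus the consequences of all applied defaults. -/
def LocallySuccessful (W : List PForm) (Pr : List Default) : Prop :=
  ∀ d ∈ Pr, ThConsistent (procTh W Pr ∪ {d.just})

/-- Reiter closure: no unapplied default has its precondition entailed and its justification
consistent with `W` plus the consequences. -/
def ReiterClosed (D : List Default) (W : List PForm) (Pr : List Default) : Prop :=
  ∀ d ∈ D, d ∉ Pr →
    ¬ ThEntails (procTh W Pr) d.prec ∨ ¬ ThConsistent (procTh W Pr ∪ {d.just})

/-- Reiter extensions: deductive closures of `W` plus the consequences of a successful and
closed process. -/
def ReiterExtension (D : List Default) (W : List PForm) (E : Th) : Prop :=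
  ∃ Pr, IsProcess D W Pr ∧ LocallySuccessful W Pr ∧ ReiterClosed D W Pr ∧
    E = Cn (procTh W Pr)

/-- Skeptical entailment in Reiter's default logic. -/
def ReiterSkeptical (D : List Default) (W : List PForm) (φ : PForm) : Prop :=
  ∀ E, ReiterExtension D W E → φ ∈ E

/-- Two theories are var-equivalent w.r.t. a set of variables `X` when they entail exactly the
same formulas built only from variables in `X`. -/
def VarEquiv (X : Finset ℕ) (Γ Δ : Th) : Prop :=
  ∀ φ : PForm, φ.vars ⊆ X → (ThEntails Γ φ ↔ ThEntails Δ φ)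

/-- A dummy default. -/
def dflt : Default := ⟨PForm.fls, PForm.fls, PForm.fls⟩

/-- Conjunction of a list of formulas. -/
def listConj : List PForm → PForm
  | [] => PForm.tru
  | φ :: l => φ.andF (listConj l)

/-- The size of a default. -/
def Default.size (d : Default) : ℕ := d.prec.size + d.just.size + d.cons.size

/-- The size of a default theory. -/
def theorySize (D : List Default) (W : List PForm) : ℕ :=
  (D.map Default.size).sum + (W.map PForm.size).sum + D.length + W.length + 1

/-- The variables of a default theory. -/
def theoryVars (D : List Default) (W : List PForm) : Finset ℕ :=
  (D.map (fun d => d.prec.vars ∪ d.just.vars ∪ d.cons.vars)).foldr (· ∪ ·) ∅ ∪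
    (W.map PForm.vars).foldr (· ∪ ·) ∅

/-- A strict upper bound on the variables of a default theory. -/
def varBound (D : List Default) (W : List PForm) : ℕ := (theoryVars D W).sup id + 1

end DLogic
namespace DLogic

/-- An abstract regular default-logic semantics: successfulness and closure predicates on
sequences of defaults, with successfulness antimonotonic and the empty process successful
whenever the background theory is consistent. -/
structure RegSem : Type 1 where
  Succ : List Default → List PForm → List Default → Prop
  Closed : List Default → List PForm → List Default → Prop
  anti : ∀ D W Pr Pr', Succ D W (Pr ++ Pr') → Succ D W Pr
  empty_succ : ∀ D W, ThConsistent (WSet W) → Succ D W []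

/-- A semantics is fail-safe if every successful process is a prefix of a successful and
closed process. -/
def RegSem.FailSafe (S : RegSem) : Prop :=
  ∀ D W Pr, IsProcess D W Pr → S.Succ D W Pr →
    ∃ Pr', IsProcess D W (Pr ++ Pr') ∧ S.Succ D W (Pr ++ Pr') ∧ S.Closed D W (Pr ++ Pr')

/-- Extensions under an abstract regular semantics. -/
def RegSem.Extension (S : RegSem) (D : List Default) (W : List PForm) (E : Th) : Prop :=
  ∃ Pr, IsProcess D W Pr ∧ S.Succ D W Pr ∧ S.Closed D W Pr ∧ E = Cn (procTh W Pr)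

/-- Skeptical entailment under an abstract regular semantics. -/
def RegSem.Skeptical (S : RegSem) (D : List Default) (W : List PForm) (φ : PForm) : Prop :=
  ∀ E, S.Extension D W E → φ ∈ E

end DLogic
namespace DLogic

/-! ### The simulating normal default theory `⟨D_u^F, W_u⟩`

The original theory `⟨D, W⟩` has `m = D.length` defaults and variables below `N`.
Its regular semantics is represented by `u` consistency tests `δ j` and a circuit `C`.
In a test formula `δ j`, the variable `2*k` stands for the original variable `k` and the
variable `2*i+1` stands for the membership atom `(d_i ∈ Π)`.  In the circuit `C`, the
variable `2*j` stands for the test result `o_j` and `2*i+1` stands for `c_i`.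

Fresh variables: `X₀`-copy of `k` is `N + k`; the `X_j`-copy (for test `j`) of `k` is
`N + N*(j+1) + k`; and `c i`, `e i`, `o j`, `t j` live above `N*(u+2)`. -/

namespace Sim

/-- Renaming of the original alphabet `X` to its copy `X₀`. -/
def ρ0 (N : ℕ) : ℕ → ℕ := fun k => N + k

/-- The `X_j` copy of original variable `k`. -/
def copyV (N j k : ℕ) : ℕ := N + N * (j + 1) + k

/-- The variable `c i`. -/
def cV (N u m i : ℕ) : ℕ := N * (u + 2) + i

/-- The variable `e i`. -/
def eV (N u m i : ℕ) : ℕ := N * (u + 2) + m + i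

/-- The variable `o j`. -/
def oV (N u m j : ℕ) : ℕ := N * (u + 2) + 2 * m + j

/-- The variable `t j`. -/
def tV (N u m j : ℕ) : ℕ := N * (u + 2) + 2 * m + u + j

/-- The `i`-th default of the original theory. -/
def origD (D : List Default) (i : ℕ) : Default := D.getD i dflt

/-- Justification/consequence of the default `a i`. -/
def aFml (D : List Default) (N u i : ℕ) : PForm :=
  ((origD D i).cons.rename (ρ0 N)).andF
    ((PForm.var (cV N u D.length i)).andF (PForm.var (eV N u D.length i)))

/-- The default `a i`, simulating the application of `d i`. -/
def aDef (D : List Default) (N u i : ℕ) : Default :=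
  ⟨(origD D i).prec.rename (ρ0 N), aFml D N u i, aFml D N u i⟩

/-- Justification/consequence of the default `n i`. -/
def nFml (D : List Default) (N u i : ℕ) : PForm :=
  ((PForm.var (cV N u D.length i)).neg).andF (PForm.var (eV N u D.length i))

/-- The default `n i`, simulating the non-application of `d i`. -/
def nDef (D : List Default) (N u i : ℕ) : Default :=
  ⟨PForm.tru, nFml D N u i, nFml D N u i⟩

/-- The formula `E = e₁ ∧ ⋯ ∧ e_m`. -/
def Econj (N u m : ℕ) : PForm :=
  listConj ((List.range m).map fun i => PForm.var (eV N u m i))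

/-- The formula `T = t₁ ∧ ⋯ ∧ t_u`. -/
def Tconj (N u m : ℕ) : PForm :=
  listConj ((List.range u).map fun j => PForm.var (tV N u m j))

/-- The test formula `δ j` instantiated in the simulating theory: original variables are
replaced by their `X_j`-copies and membership atoms by the variables `c i`. -/
def instδ (N u m : ℕ) (δ : ℕ → PForm) (j : ℕ) : PForm :=
  (δ j).subst fun k =>
    if k % 2 = 0 then PForm.var (copyV N j (k / 2)) else PForm.var (cV N u m (k / 2))

/-- Justification/consequence of the default `v j`. -/
def vFml (N u m : ℕ) (δ : ℕ → PForm) (j : ℕ) : PForm :=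
  (instδ N u m δ j).andF ((PForm.var (oV N u m j)).andF (PForm.var (tV N u m j)))

/-- The default `v j`, recording a positive outcome of the `j`-th consistency test. -/
def vDef (N u m : ℕ) (δ : ℕ → PForm) (j : ℕ) : Default :=
  ⟨Econj N u m, vFml N u m δ j, vFml N u m δ j⟩

/-- Justification/consequence of the default `g j`. -/
def gFml (N u m j : ℕ) : PForm :=
  ((PForm.var (oV N u m j)).neg).andF (PForm.var (tV N u m j))

/-- The default `g j`, recording a negative outcome of the `j`-th consistency test. -/
def gDef (N u m : ℕ) (δ : ℕ → PForm) (j : ℕ) : Default :=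
  ⟨(Econj N u m).andF (instδ N u m δ j).neg, gFml N u m j, gFml N u m j⟩

/-- The circuit `C` instantiated on the variables `o j` and `c i`. -/
def instC (N u m : ℕ) (C : PForm) : PForm :=
  C.subst fun k =>
    if k % 2 = 0 then PForm.var (oV N u m (k / 2)) else PForm.var (cV N u m (k / 2))

/-- Consequence of `z₁`: `W ∧ ⋀ (c i → γ i)` over the original alphabet. -/
def z1Fml (D : List Default) (W : List PForm) (N u : ℕ) : PForm :=
  (listConj W).andF
    (listConj ((List.range D.length).map fun i =>
      (PForm.var (cV N u D.length i)).imp (origD D i).cons))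

/-- The default `z₁`, outputting the simulated extension. -/
def z1Def (D : List Default) (W : List PForm) (N u : ℕ) (C : PForm) : Default :=
  ⟨((Econj N u D.length).andF (Tconj N u D.length)).andF (instC N u D.length C),
    z1Fml D W N u, z1Fml D W N u⟩

/-- The default `z₂`, outputting `F` when the simulated process is not successful and
closed. -/
def z2Def (D : List Default) (N u : ℕ) (C : PForm) (F : PForm) : Default :=
  ⟨((Econj N u D.length).andF (Tconj N u D.length)).andF (instC N u D.length C).neg, F, F⟩

/-- The defaults `D_u^F = A ∪ N ∪ V ∪ G ∪ Z` of the simulating theory. -/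
def simD (D : List Default) (W : List PForm) (N u : ℕ) (δ : ℕ → PForm) (C F : PForm) :
    List Default :=
  (List.range D.length).map (aDef D N u) ++ (List.range D.length).map (nDef D N u) ++
    (List.range u).map (vDef N u D.length δ) ++ (List.range u).map (gDef N u D.length δ) ++
    [z1Def D W N u C, z2Def D N u C F]

/-- The background theory `W_u = W[X/X₀]`. -/
def simW (W : List PForm) (N : ℕ) : List PForm := W.map (PForm.rename (ρ0 N))

/-- `O(Π)`: the sequence of original defaults corresponding to the `A`-defaults of `Π`. -/
def Omap (D : List Default) (N u : ℕ) (Pr : List Default) : List Default :=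
  Pr.filterMap fun d =>
    ((List.range D.length).find? fun i => decide (d = aDef D N u i)).map (origD D)

/-- The membership vector of a simulated process. -/
def memOf (D : List Default) (Pr : List Default) (i : ℕ) : Bool :=
  decide (i < D.length ∧ origD D i ∈ Pr)

/-- The test formula `δ j` instantiated at a membership vector, over the original alphabet. -/
def testAt (δ : ℕ → PForm) (mem : ℕ → Bool) (j : ℕ) : PForm :=
  (δ j).subst fun k =>
    if k % 2 = 0 then PForm.var (k / 2) else cond (mem (k / 2)) PForm.tru PForm.fls

/-- The circuit `C` holds on given test results `o` and membership bits `c`. -/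
def circHolds (C : PForm) (o c : ℕ → Bool) : Prop :=
  C.eval (fun k => if k % 2 = 0 then o (k / 2) else c (k / 2)) = true

open Classical in
/-- Boolean truth value of a proposition. -/
noncomputable def bOf (P : Prop) : Bool := if P then true else false

/-- The tests `δ` and the circuit `C` represent the regular semantics `S` on the theory
`⟨D, W⟩`: a process is successful and closed iff `C` evaluates to true when each `o j` is the
consistency of the instantiated `j`-th test and each `c i` is the membership bit of `d i`. -/
def Represents (S : RegSem) (D : List Default) (W : List PForm) (u : ℕ) (δ : ℕ → PForm)
    (C : PForm) : Prop :=
  ∀ Pr, IsProcess D W Pr →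
    ((S.Succ D W Pr ∧ S.Closed D W Pr) ↔
      circHolds C (fun j => bOf (ThConsistent {testAt δ (memOf D Pr) j})) (memOf D Pr))

/-- All variables of the original theory are below `N`. -/
def VarsBelow (D : List Default) (W : List PForm) (N : ℕ) : Prop :=
  (∀ d ∈ D, ∀ k ∈ d.prec.vars ∪ d.just.vars ∪ d.cons.vars, k < N) ∧
    ∀ φ ∈ W, ∀ k ∈ φ.vars, k < N

/-- The variables of the tests and of the circuit are in range. -/
def TestVarsOK (m N u : ℕ) (δ : ℕ → PForm) (C : PForm) : Prop :=
  (∀ j < u, ∀ k ∈ (δ j).vars, (k % 2 = 0 → k / 2 < N) ∧ (k % 2 = 1 → k / 2 < m)) ∧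
    ∀ k ∈ C.vars, (k % 2 = 0 → k / 2 < u) ∧ (k % 2 = 1 → k / 2 < m)

end Sim

end DLogic
namespace DLogic

/-! ### Complexity-theoretic notions -/

/-- `f : ℕ → ℕ` is computable in polynomial time (by a two-stack Turing machine, with the
standard binary encoding of natural numbers). -/
def PolyTime (f : ℕ → ℕ) : Prop :=
  Nonempty
    (Turing.TM2ComputableInPolyTime Computability.encodingNatBool.encode
      Computability.encodingNatBool.encode f)

/-- The class P of polynomial-time decidable languages. -/
def InP (L : Set ℕ) : Prop := ∃ f, PolyTime f ∧ ∀ x, x ∈ L ↔ f x = 1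

/-- The levels `Σₖᵖ` of the polynomial hierarchy. -/
def SigmaP : ℕ → Set ℕ → Prop
  | 0, L => InP L
  | (k + 1), L =>
      ∃ (p : Polynomial ℕ) (M : Set ℕ), SigmaP k Mᶜ ∧
        ∀ x, x ∈ L ↔ ∃ y, Nat.size y ≤ p.eval (Nat.size x) ∧ Nat.pair x y ∈ M

/-- The levels `Πₖᵖ` of the polynomial hierarchy. -/
def PiP (k : ℕ) (L : Set ℕ) : Prop := SigmaP k Lᶜ

/-- The class `Dᵖ`: intersections of an NP language and a coNP language. -/
def InDP (L : Set ℕ) : Prop :=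
  ∃ L₁ L₂ : Set ℕ, SigmaP 1 L₁ ∧ PiP 1 L₂ ∧ L = L₁ ∩ L₂

open Classical in
/-- Iterated computation with access to an oracle `A`: in each round the step function
receives the current state paired with the oracle's answer on the current state. -/
noncomputable def oracleIter (step : ℕ → ℕ) (A : Set ℕ) : ℕ → ℕ → ℕ
  | 0, s => s
  | (k + 1), s => oracleIter step A k (step (Nat.pair s (if s ∈ A then 1 else 0)))

/-- The class `Δ₂ᵖ = Pᴺᴾ`: languages decidable by a polynomial-time machine making
polynomially many calls to an NP oracle. -/
def InDelta2 (L : Set ℕ) : Prop :=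
  ∃ A : Set ℕ, SigmaP 1 A ∧ ∃ (p : Polynomial ℕ) (step : ℕ → ℕ), PolyTime step ∧
    (∀ x k, k ≤ p.eval (Nat.size x) →
      Nat.size (oracleIter step A k x) ≤ p.eval (Nat.size x)) ∧
    ∀ x, x ∈ L ↔ (oracleIter step A (p.eval (Nat.size x)) x) % 2 = 1

/-- Functions computable in polynomial time with an NP oracle. -/
def DeltaTwoFun (f : ℕ → ℕ) : Prop :=
  ∃ A : Set ℕ, SigmaP 1 A ∧ ∃ (p : Polynomial ℕ) (step : ℕ → ℕ), PolyTime step ∧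
    (∀ x k, k ≤ p.eval (Nat.size x) →
      Nat.size (oracleIter step A k x) ≤ p.eval (Nat.size x)) ∧
    ∀ x, f x = oracleIter step A (p.eval (Nat.size x)) x

/-- Polynomial-time many-one reducibility. -/
def PolyReducible (L M : Set ℕ) : Prop := ∃ f, PolyTime f ∧ ∀ x, x ∈ L ↔ f x ∈ M

/-- Encoding of formulas as natural numbers. -/
def PForm.enc : PForm → ℕ
  | .var n => Nat.pair 0 n
  | .fls => Nat.pair 1 0
  | .imp a b => Nat.pair 2 (Nat.pair a.enc b.enc)

/-- Encoding of defaults as natural numbers. -/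
def Default.enc (d : Default) : ℕ :=
  Nat.pair d.prec.enc (Nat.pair d.just.enc d.cons.enc)

/-- Encoding of lists as natural numbers. -/
def encList {α : Type} (f : α → ℕ) : List α → ℕ
  | [] => 0
  | x :: l => Nat.pair (f x) (encList f l) + 1

/-- Encoding of default theories. -/
def encTheory (D : List Default) (W : List PForm) : ℕ :=
  Nat.pair (encList Default.enc D) (encList PForm.enc W)

/-- Encoding of a default theory together with a query variable. -/
def encInstance (D : List Default) (W : List PForm) (a : ℕ) : ℕ :=
  Nat.pair (encTheory D W) a

/-- Encoding of a default theory together with a sequence of defaults. -/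
def encTriple (D : List Default) (W : List PForm) (Pr : List Default) : ℕ :=
  Nat.pair (encTheory D W) (encList Default.enc Pr)

/-- A binary function of polynomial size (in the size of its first argument plus its second
argument). -/
def PolysizeFun2 (g : ℕ → ℕ → ℕ) : Prop :=
  ∃ p : Polynomial ℕ, ∀ x n, Nat.size (g x n) ≤ p.eval (Nat.size x + n)

/-- Non-uniform compilability class `nu-comp-C` for problems of pairs (fixed part, varying
part): the fixed part may be preprocessed, knowing the size of the varying part, into a
polynomial-size data structure after which the problem is in `C`. -/
def InNuComp (C : Set ℕ → Prop) (L : Set (ℕ × ℕ)) : Prop :=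
  ∃ g : ℕ → ℕ → ℕ, PolysizeFun2 g ∧ ∃ M : Set ℕ, C M ∧
    ∀ x y, ((x, y) ∈ L ↔ Nat.pair (g x (Nat.size y)) y ∈ M)

/-- Non-uniform compilability (nu-comp) reductions. -/
def NuCompReducible (A B : Set (ℕ × ℕ)) : Prop :=
  ∃ f₁ f₂ : ℕ → ℕ → ℕ, ∃ g : ℕ → ℕ,
    PolysizeFun2 f₁ ∧ PolysizeFun2 f₂ ∧ PolyTime g ∧
    ∀ x y, ((x, y) ∈ A ↔ (f₁ x (Nat.size y), g (Nat.pair (f₂ x (Nat.size y)) y)) ∈ B)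

/-- The polynomial hierarchy collapses. -/
def PHCollapses : Prop := ∃ k, ∀ L : Set ℕ, SigmaP (k + 1) L → SigmaP k L

end DLogic
namespace DLogic

/-! ### Auxiliary semantic lemmas -/

namespace PForm

@[simp] lemma eval_neg (v : ℕ → Bool) (φ : PForm) : (neg φ).eval v = !φ.eval v := by
  simp [neg, eval]

@[simp] lemma eval_tru (v : ℕ → Bool) : tru.eval v = true := by simp [tru, eval]

@[simp] lemma eval_var (v : ℕ → Bool) (n : ℕ) : (var n).eval v = v n := rfl

@[simp] lemma eval_andF (v : ℕ → Bool) (φ ψ : PForm) :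
    (andF φ ψ).eval v = (φ.eval v && ψ.eval v) := by
  cases h1 : φ.eval v <;> cases h2 : ψ.eval v <;> simp [andF, neg, eval, h1, h2]

lemma eval_subst (v : ℕ → Bool) (f : ℕ → PForm) (φ : PForm) :
    (subst f φ).eval v = φ.eval (fun n => (f n).eval v) := by
  induction φ with
  | var n => simp [subst, eval]
  | fls => simp [subst, eval]
  | imp a b iha ihb => simp [subst, eval, iha, ihb]

lemma eval_rename (v : ℕ → Bool) (σ : ℕ → ℕ) (φ : PForm) :
    (rename σ φ).eval v = φ.eval (fun n => v (σ n)) := by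
  simp [rename, eval_subst, eval]

lemma eval_congr {v w : ℕ → Bool} {φ : PForm} (h : ∀ k ∈ φ.vars, v k = w k) :
    φ.eval v = φ.eval w := by
  induction φ with
  | var n => exact h n (by simp [vars])
  | fls => rfl
  | imp a b iha ihb =>
    have ha := iha (fun k hk => h k (by simp [vars]; exact Or.inl hk))
    have hb := ihb (fun k hk => h k (by simp [vars]; exact Or.inr hk))
    simp [eval, ha, hb]

end PForm

lemma eval_listConj (v : ℕ → Bool) (l : List PForm) :
    (listConj l).eval v = true ↔ ∀ φ ∈ l, φ.eval v = true := by
  induction l with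
  | nil => simp [listConj]
  | cons a l ih => simp [listConj, PForm.eval_andF, ih]

lemma ThEntails.mono {Γ Δ : Th} {φ : PForm} (h : ThEntails Γ φ) (hs : Γ ⊆ Δ) :
    ThEntails Δ φ := fun v hv => h v (fun ψ hψ => hv ψ (hs hψ))

lemma entails_of_mem {Γ : Th} {φ : PForm} (h : φ ∈ Γ) : ThEntails Γ φ :=
  fun _ hv => hv φ h

lemma entails_tru (Γ : Th) : ThEntails Γ PForm.tru := fun v _ => by simp

lemma entails_andF_left {Γ : Th} {a b : PForm} (h : ThEntails Γ (a.andF b)) :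
    ThEntails Γ a := by
  intro v hv
  have := h v hv
  simp [PForm.eval_andF] at this
  exact this.1

lemma entails_andF_right {Γ : Th} {a b : PForm} (h : ThEntails Γ (a.andF b)) :
    ThEntails Γ b := by
  intro v hv
  have := h v hv
  simp [PForm.eval_andF] at this
  exact this.2

lemma entails_andF {Γ : Th} {a b : PForm} (ha : ThEntails Γ a) (hb : ThEntails Γ b) :
    ThEntails Γ (a.andF b) := by
  intro v hv
  simp [PForm.eval_andF, ha v hv, hb v hv]

lemma models_procTh_iff {W : List PForm} {Pr : List Default} {v : ℕ → Bool} :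
    Models v (procTh W Pr) ↔ (∀ φ ∈ W, φ.eval v = true) ∧
      ∀ d ∈ Pr, d.cons.eval v = true := by
  constructor
  · intro h
    exact ⟨fun φ hφ => h φ (Or.inl hφ), fun d hd => h d.cons (Or.inr ⟨d, hd, rfl⟩)⟩
  · rintro ⟨h1, h2⟩ φ (hφ | ⟨d, hd, rfl⟩)
    · exact h1 φ hφ
    · exact h2 d hd

lemma procTh_mono {W : List PForm} {P1 P2 : List Default} (h : ∀ d ∈ P1, d ∈ P2) :
    procTh W P1 ⊆ procTh W P2 := by
  rintro φ (hφ | ⟨d, hd, rfl⟩)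
  · exact Or.inl hφ
  · exact Or.inr ⟨d, h d hd, rfl⟩

lemma cons_mem_procTh {W : List PForm} {Pr : List Default} {d : Default} (h : d ∈ Pr) :
    d.cons ∈ procTh W Pr := Or.inr ⟨d, h, rfl⟩

lemma W_mem_procTh {W : List PForm} {Pr : List Default} {φ : PForm} (h : φ ∈ W) :
    φ ∈ procTh W Pr := Or.inl h

lemma entails_Cn {Γ : Th} {φ : PForm} : ThEntails (Cn Γ) φ ↔ ThEntails Γ φ := by
  constructor
  · intro h v hv
    exact h v (fun ψ hψ => hψ v hv)
  · intro h v hv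
    exact h v (fun ψ hψ => hv ψ (fun w hw => hw ψ hψ))

namespace Aux

open Sim

/-- Indices (in `D`) of the defaults of the original process. -/
def Lidx (D : List Default) (Pr' : List Default) : List ℕ :=
  Pr'.map (fun d => D.idxOf d)

/-- Outcome bits of the consistency tests. -/
noncomputable def oB (D : List Default) (δ : ℕ → PForm) (Pr' : List Default) (j : ℕ) : Bool :=
  bOf (ThConsistent {testAt δ (memOf D Pr') j})

open Classical in
/-- Chosen models of the consistent tests. -/
noncomputable def wit (D : List Default) (δ : ℕ → PForm) (Pr' : List Default) (j : ℕ) :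
    ℕ → Bool :=
  if h : ThConsistent {testAt δ (memOf D Pr') j} then h.choose else fun _ => false

def Apart (D : List Default) (N u : ℕ) (Pr' : List Default) : List Default :=
  (Lidx D Pr').map (aDef D N u)

def Npart (D : List Default) (N u : ℕ) (Pr' : List Default) : List Default :=
  ((List.range D.length).filter (fun i => decide (i ∉ Lidx D Pr'))).map (nDef D N u)

noncomputable def VGpart (D : List Default) (N u : ℕ) (δ : ℕ → PForm) (Pr' : List Default) :
    List Default :=
  (List.range u).map
    (fun j => cond (oB D δ Pr' j) (vDef N u D.length δ j) (gDef N u D.length δ j))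

open Classical in
noncomputable def Zpart (D : List Default) (W : List PForm) (N u : ℕ) (δ : ℕ → PForm)
    (C F : PForm) (Pr' : List Default) : List Default :=
  if circHolds C (oB D δ Pr') (memOf D Pr') then [z1Def D W N u C]
  else if ThConsistent {F} then [z2Def D N u C F] else []

noncomputable def SimPr (D : List Default) (W : List PForm) (N u : ℕ) (δ : ℕ → PForm)
    (C F : PForm) (Pr' : List Default) : List Default :=
  Apart D N u Pr' ++ (Npart D N u Pr' ++ (VGpart D N u δ Pr' ++ Zpart D W N u δ C F Pr'))

/-- The canonical valuation. -/
noncomputable def bigV (D : List Default) (N u : ℕ) (δ : ℕ → PForm) (Pr' : List Default)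
    (b v : ℕ → Bool) : ℕ → Bool := fun k =>
  if k < N then b k
  else if k < 2*N then v (k - N)
  else if k < N*(u+2) then
    cond (oB D δ Pr' (k / N - 2)) (wit D δ Pr' (k / N - 2) (k - N*(k / N - 2 + 2))) false
  else if k < N*(u+2) + D.length then memOf D Pr' (k - N*(u+2))
  else if k < N*(u+2) + 2*D.length then true
  else if k < N*(u+2) + 2*D.length + u then oB D δ Pr' (k - (N*(u+2) + 2*D.length))
  else true

section BigV

variable (D : List Default) (N u : ℕ) (δ : ℕ → PForm) (Pr' : List Default) (b v : ℕ → Bool)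

lemma N_le_band : N ≤ N*(u+2) := by
  calc N = N*1 := (mul_one N).symm
  _ ≤ N*(u+2) := Nat.mul_le_mul_left N (by omega)

lemma twoN_le_band : 2*N ≤ N*(u+2) := by
  calc 2*N = N*2 := by ring
  _ ≤ N*(u+2) := Nat.mul_le_mul_left N (by omega)

lemma bigV_lt {k : ℕ} (h : k < N) : bigV D N u δ Pr' b v k = b k := by
  simp [bigV, h]

lemma bigV_rho {k : ℕ} (h : k < N) : bigV D N u δ Pr' b v (N + k) = v k := by
  have h1 : ¬ (N + k < N) := by omega
  have h2 : N + k < 2*N := by omega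
  simp [bigV, h1, h2]

lemma bigV_copy {j r : ℕ} (hj : j < u) (hr : r < N) :
    bigV D N u δ Pr' b v (copyV N j r) = cond (oB D δ Pr' j) (wit D δ Pr' j r) false := by
  have hN : 0 < N := by omega
  have hk : copyV N j r = N*(j+2) + r := by simp [copyV]; ring
  have h1 : ¬ (copyV N j r < N) := by
    rw [hk]
    have : N*1 ≤ N*(j+2) := Nat.mul_le_mul_left N (by omega)
    omega
  have h2 : ¬ (copyV N j r < 2*N) := by
    rw [hk]
    have : N*2 ≤ N*(j+2) := Nat.mul_le_mul_left N (by omega)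
    omega
  have h3 : copyV N j r < N*(u+2) := by
    rw [hk]
    have : N*(j+3) ≤ N*(u+2) := Nat.mul_le_mul_left N (by omega)
    have : N*(j+2) + N ≤ N*(u+2) := by
      have h' : N*(j+3) = N*(j+2) + N := by ring
      omega
    omega
  have hdiv : copyV N j r / N = j + 2 := by
    rw [hk, Nat.mul_add_div hN]
    simp [Nat.div_eq_of_lt hr]
  simp only [bigV, h1, h2, h3, if_false, if_true, hdiv]
  have : j + 2 - 2 = j := by omega
  rw [this]
  have : copyV N j r - N*(j+2) = r := by rw [hk]; omega
  rw [this]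

lemma bigV_c {i : ℕ} (hi : i < D.length) :
    bigV D N u δ Pr' b v (cV N u D.length i) = memOf D Pr' i := by
  have h0 := N_le_band N u
  have h2 := twoN_le_band N u
  have hk : cV N u D.length i = N*(u+2) + i := rfl
  have h1 : ¬ (cV N u D.length i < N) := by rw [hk]; omega
  have h2' : ¬ (cV N u D.length i < 2*N) := by rw [hk]; omega
  have h3 : ¬ (cV N u D.length i < N*(u+2)) := by rw [hk]; omega
  have h4 : cV N u D.length i < N*(u+2) + D.length := by rw [hk]; omega
  simp only [bigV, h1, h2', h3, h4, if_false, if_true]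
  congr 1
  rw [hk]; omega

lemma bigV_e {i : ℕ} (hi : i < D.length) :
    bigV D N u δ Pr' b v (eV N u D.length i) = true := by
  have h0 := N_le_band N u
  have h2 := twoN_le_band N u
  have hk : eV N u D.length i = N*(u+2) + D.length + i := rfl
  have h1 : ¬ (eV N u D.length i < N) := by rw [hk]; omega
  have h2' : ¬ (eV N u D.length i < 2*N) := by rw [hk]; omega
  have h3 : ¬ (eV N u D.length i < N*(u+2)) := by rw [hk]; omega
  have h4 : ¬ (eV N u D.length i < N*(u+2) + D.length) := by rw [hk]; omega
  have h5 : eV N u D.length i < N*(u+2) + 2*D.length := by rw [hk]; omega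
  simp [bigV, h1, h2', h3, h4, h5]

lemma bigV_o {j : ℕ} (hj : j < u) :
    bigV D N u δ Pr' b v (oV N u D.length j) = oB D δ Pr' j := by
  have h0 := N_le_band N u
  have h2 := twoN_le_band N u
  have hk : oV N u D.length j = N*(u+2) + 2*D.length + j := rfl
  have h1 : ¬ (oV N u D.length j < N) := by rw [hk]; omega
  have h2' : ¬ (oV N u D.length j < 2*N) := by rw [hk]; omega
  have h3 : ¬ (oV N u D.length j < N*(u+2)) := by rw [hk]; omega
  have h4 : ¬ (oV N u D.length j < N*(u+2) + D.length) := by rw [hk]; omega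
  have h5 : ¬ (oV N u D.length j < N*(u+2) + 2*D.length) := by rw [hk]; omega
  have h6 : oV N u D.length j < N*(u+2) + 2*D.length + u := by rw [hk]; omega
  simp only [bigV, h1, h2', h3, h4, h5, h6, if_false, if_true]
  congr 1
  rw [hk]; omega

lemma bigV_t {j : ℕ} (hj : j < u) :
    bigV D N u δ Pr' b v (tV N u D.length j) = true := by
  have h0 := N_le_band N u
  have h2 := twoN_le_band N u
  have hk : tV N u D.length j = N*(u+2) + 2*D.length + u + j := rfl
  have h1 : ¬ (tV N u D.length j < N) := by rw [hk]; omega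
  have h2' : ¬ (tV N u D.length j < 2*N) := by rw [hk]; omega
  have h3 : ¬ (tV N u D.length j < N*(u+2)) := by rw [hk]; omega
  have h4 : ¬ (tV N u D.length j < N*(u+2) + D.length) := by rw [hk]; omega
  have h5 : ¬ (tV N u D.length j < N*(u+2) + 2*D.length) := by rw [hk]; omega
  have h6 : ¬ (tV N u D.length j < N*(u+2) + 2*D.length + u) := by rw [hk]; omega
  simp [bigV, h1, h2', h3, h4, h5, h6]

end BigV

section Main

variable (D : List Default) (W : List PForm) (N u : ℕ) (δ : ℕ → PForm) (C F : PForm)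
  (Pr' : List Default)

lemma bOf_true_iff (P : Prop) : bOf P = true ↔ P := by
  by_cases h : P <;> simp [bOf, h]

lemma oB_true_iff (j : ℕ) :
    oB D δ Pr' j = true ↔ ThConsistent {testAt δ (memOf D Pr') j} := bOf_true_iff _

lemma models_singleton {v : ℕ → Bool} {φ : PForm} : Models v {φ} ↔ φ.eval v = true := by
  simp [Models, Set.mem_singleton_iff]

lemma wit_models {j : ℕ} (h : oB D δ Pr' j = true) :
    (testAt δ (memOf D Pr') j).eval (wit D δ Pr' j) = true := by
  rw [oB_true_iff] at h
  rw [wit, dif_pos h]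
  have := h.choose_spec
  rw [models_singleton] at this
  exact this

lemma memOf_true_iff (i : ℕ) :
    memOf D Pr' i = true ↔ (i < D.length ∧ origD D i ∈ Pr') := by
  simp [memOf]

lemma mem_Lidx_iff (hD : D.Nodup) (hsub : ∀ d ∈ Pr', d ∈ D) (i : ℕ) :
    i ∈ Lidx D Pr' ↔ (i < D.length ∧ origD D i ∈ Pr') := by
  constructor
  · rintro hi
    simp only [Lidx, List.mem_map] at hi
    obtain ⟨d, hd, rfl⟩ := hi
    have hdD : d ∈ D := hsub d hd
    have hlt : List.idxOf d D < D.length := List.idxOf_lt_length_iff.2 hdD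
    refine ⟨hlt, ?_⟩
    have : origD D (List.idxOf d D) = d := by
      rw [origD, List.getD_eq_getElem _ _ hlt, List.getElem_idxOf]
    rw [this]; exact hd
  · rintro ⟨hlt, hmem⟩
    simp only [Lidx, List.mem_map]
    refine ⟨origD D i, hmem, ?_⟩
    have h1 : origD D i = D[i] := by rw [origD, List.getD_eq_getElem _ _ hlt]
    have h2 : List.idxOf (origD D i) D < D.length :=
      List.idxOf_lt_length_iff.2 (h1 ▸ List.getElem_mem hlt)
    have h3 : D[List.idxOf (origD D i) D] = origD D i := List.getElem_idxOf h2
    have h4 : D[List.idxOf (origD D i) D] = D[i] := by rw [h3, h1]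
    exact (List.Nodup.getElem_inj_iff hD).1 h4

lemma memOf_eq_Lidx (hD : D.Nodup) (hsub : ∀ d ∈ Pr', d ∈ D) (i : ℕ) :
    memOf D Pr' i = true ↔ i ∈ Lidx D Pr' := by
  rw [memOf_true_iff, mem_Lidx_iff D Pr' hD hsub]

/-- Evaluation of a renamed (`X₀`-copy) formula under `bigV`. -/
lemma eval_rename_bigV {φ : PForm} (hφ : ∀ k ∈ φ.vars, k < N) (b v : ℕ → Bool) :
    (φ.rename (ρ0 N)).eval (bigV D N u δ Pr' b v) = φ.eval v := by
  rw [PForm.eval_rename]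
  exact PForm.eval_congr (fun k hk => by
    simp only [ρ0]
    exact bigV_rho D N u δ Pr' b v (hφ k hk))

/-- Evaluation of an original-alphabet formula under `bigV`. -/
lemma eval_orig_bigV {φ : PForm} (hφ : ∀ k ∈ φ.vars, k < N) (b v : ℕ → Bool) :
    φ.eval (bigV D N u δ Pr' b v) = φ.eval b := by
  exact PForm.eval_congr (fun k hk => bigV_lt D N u δ Pr' b v (hφ k hk))

lemma eval_instδ_bigV (ht : TestVarsOK D.length N u δ C) {j : ℕ} (hj : j < u)
    (b v : ℕ → Bool) :
    (instδ N u D.length δ j).eval (bigV D N u δ Pr' b v)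
      = (testAt δ (memOf D Pr') j).eval
          (fun r => cond (oB D δ Pr' j) (wit D δ Pr' j r) false) := by
  rw [instδ, testAt, PForm.eval_subst, PForm.eval_subst]
  apply PForm.eval_congr
  intro k hk
  obtain ⟨he, ho⟩ := ht.1 j hj k hk
  rcases Nat.mod_two_eq_zero_or_one k with h2 | h2
  · simp only [h2, if_pos rfl, PForm.eval]
    exact bigV_copy D N u δ Pr' b v hj (he h2)
  · have : ¬ (k % 2 = 0) := by omega
    simp only [h2, this, one_ne_zero, if_false, PForm.eval]
    rw [bigV_c D N u δ Pr' b v (ho h2)]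
    cases hm : memOf D Pr' (k / 2) <;> simp [PForm.eval]

lemma eval_instC_bigV (ht : TestVarsOK D.length N u δ C) (b v : ℕ → Bool) :
    (instC N u D.length C).eval (bigV D N u δ Pr' b v)
      = C.eval (fun k => if k % 2 = 0 then oB D δ Pr' (k / 2) else memOf D Pr' (k / 2)) := by
  rw [instC, PForm.eval_subst]
  apply PForm.eval_congr
  intro k hk
  obtain ⟨he, ho⟩ := ht.2 k hk
  rcases Nat.mod_two_eq_zero_or_one k with h2 | h2
  · simp only [h2, if_pos rfl, PForm.eval]
    exact bigV_o D N u δ Pr' b v (he h2)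
  · have : ¬ (k % 2 = 0) := by omega
    simp only [h2, this, if_false, PForm.eval]
    exact bigV_c D N u δ Pr' b v (ho h2)

lemma circHolds_iff_evalC :
    circHolds C (fun j => bOf (ThConsistent {testAt δ (memOf D Pr') j})) (memOf D Pr')
      ↔ C.eval (fun k => if k % 2 = 0 then oB D δ Pr' (k / 2)
          else memOf D Pr' (k / 2)) = true := by
  rw [circHolds]
  constructor <;> intro h <;> convert h using 2 <;> rfl

lemma origD_mem (i : ℕ) (hi : i < D.length) : origD D i ∈ D := by
  rw [origD, List.getD_eq_getElem _ _ hi]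
  exact List.getElem_mem hi

lemma origD_vars (hv : VarsBelow D W N) {i : ℕ} (hi : i < D.length) :
    ∀ k ∈ (origD D i).cons.vars, k < N := by
  intro k hk
  exact hv.1 (origD D i) (origD_mem D i hi) k (by simp [hk])

/-- The canonical valuation models the simulating theory. -/
lemma bigV_models (hD : D.Nodup) (hv : VarsBelow D W N)
    (ht : TestVarsOK D.length N u δ C) (hF : ∀ k ∈ F.vars, k < N)
    (hsub : ∀ d ∈ Pr', d ∈ D) (b v : ℕ → Bool)
    (hvmod : Models v (procTh W Pr'))
    (hb1 : circHolds C (oB D δ Pr') (memOf D Pr') → Models b (procTh W Pr'))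
    (hb2 : ¬ circHolds C (oB D δ Pr') (memOf D Pr') → ThConsistent {F} →
      F.eval b = true) :
    Models (bigV D N u δ Pr' b v) (procTh (simW W N) (SimPr D W N u δ C F Pr')) := by
  rw [models_procTh_iff]
  constructor
  · intro φ hφ
    simp only [simW, List.mem_map] at hφ
    obtain ⟨ψ, hψ, rfl⟩ := hφ
    rw [eval_rename_bigV D N u δ Pr' (fun k hk => hv.2 ψ hψ k hk)]
    exact hvmod ψ (W_mem_procTh hψ)
  · intro d hd
    simp only [SimPr, List.mem_append] at hd
    rcases hd with hd | hd | hd | hd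
    · -- A-part
      simp only [Apart, List.mem_map] at hd
      obtain ⟨i, hi, rfl⟩ := hd
      obtain ⟨him, horig⟩ := (mem_Lidx_iff D Pr' hD hsub i).1 hi
      simp only [aDef, aFml, PForm.eval_andF, PForm.eval]
      rw [eval_rename_bigV D N u δ Pr' (origD_vars D W N hv him),
        bigV_c D N u δ Pr' b v him, bigV_e D N u δ Pr' b v him]
      have h1 : (origD D i).cons.eval v = true := hvmod _ (cons_mem_procTh horig)
      have h2 : memOf D Pr' i = true := (memOf_true_iff D Pr' i).2 ⟨him, horig⟩
      simp [h1, h2]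
    · -- N-part
      simp only [Npart, List.mem_map, List.mem_filter, List.mem_range] at hd
      obtain ⟨i, ⟨him, hnot⟩, rfl⟩ := hd
      have hnot' : i ∉ Lidx D Pr' := by simpa using hnot
      simp only [nDef, nFml, PForm.eval_andF, PForm.eval_neg, PForm.eval]
      rw [bigV_c D N u δ Pr' b v him, bigV_e D N u δ Pr' b v him]
      have h2 : memOf D Pr' i = false := by
        rw [← Bool.not_eq_true, memOf_eq_Lidx D Pr' hD hsub]
        exact hnot'
      simp [h2]
    · -- VG-part
      simp only [VGpart, List.mem_map, List.mem_range] at hd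
      obtain ⟨j, hj, rfl⟩ := hd
      cases ho : oB D δ Pr' j
      · simp only [ho, cond_false, gDef, gFml, PForm.eval_andF, PForm.eval_neg, PForm.eval]
        rw [bigV_o D N u δ Pr' b v hj, bigV_t D N u δ Pr' b v hj]
        simp [ho]
      · simp only [ho, cond_true, vDef, vFml, PForm.eval_andF, PForm.eval]
        rw [bigV_o D N u δ Pr' b v hj, bigV_t D N u δ Pr' b v hj,
          eval_instδ_bigV D N u δ C Pr' ht hj]
        have : (fun r => cond (oB D δ Pr' j) (wit D δ Pr' j r) false) = wit D δ Pr' j := by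
          funext r; rw [ho]; rfl
        rw [this, wit_models D δ Pr' ho, ho]
        rfl
    · -- Z-part
      by_cases hz : circHolds C (oB D δ Pr') (memOf D Pr')
      · rw [Zpart, if_pos hz] at hd
        simp only [List.mem_singleton] at hd
        subst hd
        simp only [z1Def, z1Fml, PForm.eval_andF]
        have hbmod := hb1 hz
        have hWc : (listConj W).eval (bigV D N u δ Pr' b v) = true := by
          rw [eval_listConj]
          intro φ hφ
          rw [eval_orig_bigV D N u δ Pr' (fun k hk => hv.2 φ hφ k hk)]
          exact hbmod φ (W_mem_procTh hφ)
        have hCc : (listConj ((List.range D.length).map fun i =>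
            (PForm.var (cV N u D.length i)).imp (origD D i).cons)).eval
            (bigV D N u δ Pr' b v) = true := by
          rw [eval_listConj]
          intro φ hφ
          simp only [List.mem_map, List.mem_range] at hφ
          obtain ⟨i, hi, rfl⟩ := hφ
          simp only [PForm.eval]
          rw [bigV_c D N u δ Pr' b v hi]
          cases hm : memOf D Pr' i
          · simp
          · have := (memOf_true_iff D Pr' i).1 hm
            rw [eval_orig_bigV D N u δ Pr' (origD_vars D W N hv hi)]
            have := hbmod _ (cons_mem_procTh this.2)
            simp [this]
        simp [hWc, hCc]
      · rw [Zpart, if_neg hz] at hd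
        by_cases hFc : ThConsistent {F}
        · rw [if_pos hFc] at hd
          simp only [List.mem_singleton] at hd
          subst hd
          simp only [z2Def]
          rw [eval_orig_bigV D N u δ Pr' hF]
          exact hb2 hz hFc
        · rw [if_neg hFc] at hd
          simp at hd

lemma pin_ce (hD : D.Nodup) (hsub : ∀ d ∈ Pr', d ∈ D) {v : ℕ → Bool}
    (hA : ∀ i ∈ Lidx D Pr', (aFml D N u i).eval v = true)
    (hN : ∀ i, i < D.length → i ∉ Lidx D Pr' → (nFml D N u i).eval v = true) :
    ∀ i, i < D.length →
      v (cV N u D.length i) = memOf D Pr' i ∧ v (eV N u D.length i) = true := by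
  intro i hi
  by_cases h : i ∈ Lidx D Pr'
  · have h1 := hA i h
    simp only [aFml, PForm.eval_andF, PForm.eval_var, Bool.and_eq_true] at h1
    have hm : memOf D Pr' i = true := (memOf_eq_Lidx D Pr' hD hsub i).2 h
    exact ⟨by rw [h1.2.1, hm], h1.2.2⟩
  · have h1 := hN i hi h
    simp only [nFml, PForm.eval_andF, PForm.eval_neg, PForm.eval_var, Bool.and_eq_true,
      Bool.not_eq_true'] at h1
    have hm : memOf D Pr' i = false := by
      rw [← Bool.not_eq_true, memOf_eq_Lidx D Pr' hD hsub]; exact h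
    exact ⟨by rw [h1.1, hm], h1.2⟩

lemma pin_ot {v : ℕ → Bool}
    (hVG : ∀ j, j < u → (cond (oB D δ Pr' j) (vFml N u D.length δ j)
      (gFml N u D.length j)).eval v = true) :
    ∀ j, j < u →
      v (oV N u D.length j) = oB D δ Pr' j ∧ v (tV N u D.length j) = true := by
  intro j hj
  have h1 := hVG j hj
  cases ho : oB D δ Pr' j
  · rw [ho] at h1
    simp only [cond_false, gFml, PForm.eval_andF, PForm.eval_neg, PForm.eval_var,
      Bool.and_eq_true, Bool.not_eq_true'] at h1
    exact ⟨h1.1, h1.2⟩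
  · rw [ho] at h1
    simp only [cond_true, vFml, PForm.eval_andF, PForm.eval_var, Bool.and_eq_true] at h1
    exact ⟨h1.2.1, h1.2.2⟩

lemma eval_Econj_of_pin {v : ℕ → Bool}
    (h : ∀ i, i < D.length → v (eV N u D.length i) = true) :
    (Econj N u D.length).eval v = true := by
  rw [Econj, eval_listConj]
  intro φ hφ
  simp only [List.mem_map, List.mem_range] at hφ
  obtain ⟨i, hi, rfl⟩ := hφ
  exact h i hi

lemma eval_Tconj_of_pin {v : ℕ → Bool}
    (h : ∀ j, j < u → v (tV N u D.length j) = true) :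
    (Tconj N u D.length).eval v = true := by
  rw [Tconj, eval_listConj]
  intro φ hφ
  simp only [List.mem_map, List.mem_range] at hφ
  obtain ⟨j, hj, rfl⟩ := hφ
  exact h j hj

lemma eval_instδ_pinned (ht : TestVarsOK D.length N u δ C) {j : ℕ} (hj : j < u)
    {v : ℕ → Bool}
    (hpin : ∀ i, i < D.length → v (cV N u D.length i) = memOf D Pr' i) :
    (instδ N u D.length δ j).eval v
      = (testAt δ (memOf D Pr') j).eval (fun r => v (copyV N j r)) := by
  rw [instδ, testAt, PForm.eval_subst, PForm.eval_subst]
  apply PForm.eval_congr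
  intro k hk
  obtain ⟨he, ho⟩ := ht.1 j hj k hk
  rcases Nat.mod_two_eq_zero_or_one k with h2 | h2
  · simp [h2, PForm.eval]
  · have h0 : ¬ (k % 2 = 0) := by omega
    simp only [h2, h0, one_ne_zero, if_false, PForm.eval]
    rw [hpin (k / 2) (ho h2)]
    cases hm : memOf D Pr' (k / 2) <;> simp [PForm.eval]

lemma eval_instC_pinned (ht : TestVarsOK D.length N u δ C) {v : ℕ → Bool}
    (hpc : ∀ i, i < D.length → v (cV N u D.length i) = memOf D Pr' i)
    (hpo : ∀ j, j < u → v (oV N u D.length j) = oB D δ Pr' j) :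
    (instC N u D.length C).eval v
      = C.eval (fun k => if k % 2 = 0 then oB D δ Pr' (k / 2)
          else memOf D Pr' (k / 2)) := by
  rw [instC, PForm.eval_subst]
  apply PForm.eval_congr
  intro k hk
  obtain ⟨he, ho⟩ := ht.2 k hk
  rcases Nat.mod_two_eq_zero_or_one k with h2 | h2
  · simp only [h2, if_pos rfl, PForm.eval]
    exact hpo _ (he h2)
  · have h0 : ¬ (k % 2 = 0) := by omega
    simp only [h2, h0, if_false, PForm.eval]
    exact hpc _ (ho h2)

lemma not_consistent_eval {φ : PForm} (h : ¬ ThConsistent {φ}) (w : ℕ → Bool) :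
    φ.eval w = false := by
  rw [← Bool.not_eq_true]
  intro he
  exact h ⟨w, models_singleton.2 he⟩

lemma circHolds_eval_iff :
    circHolds C (oB D δ Pr') (memOf D Pr') ↔
      C.eval (fun k => if k % 2 = 0 then oB D δ Pr' (k / 2)
        else memOf D Pr' (k / 2)) = true := Iff.rfl

/-- Entailment transfer along the renaming `ρ0`. -/
lemma entails_rename_transfer {Γ : Th} {Q : List Default} {φ : PForm}
    (hW : ∀ ψ ∈ W, ThEntails Γ (ψ.rename (ρ0 N)))
    (hQ : ∀ d ∈ Q, ThEntails Γ (d.cons.rename (ρ0 N)))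
    (h : ThEntails (procTh W Q) φ) : ThEntails Γ (φ.rename (ρ0 N)) := by
  intro v hv
  have hmod : Models (fun n => v (ρ0 N n)) (procTh W Q) := by
    rw [models_procTh_iff]
    constructor
    · intro ψ hψ
      have := hW ψ hψ v hv
      rwa [PForm.eval_rename] at this
    · intro d hd
      have := hQ d hd v hv
      rwa [PForm.eval_rename] at this
  have := h _ hmod
  rwa [PForm.eval_rename]

lemma origD_indexOf {d : Default} (hd : d ∈ D) : origD D (D.idxOf d) = d := by
  have hlt : List.idxOf d D < D.length := List.idxOf_lt_length_iff.2 hd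
  rw [origD, List.getD_eq_getElem _ _ hlt, List.getElem_idxOf]

/-! #### Structural distinctness lemmas -/

lemma andF_inj {a b c d : PForm} : a.andF b = c.andF d ↔ a = c ∧ b = d := by
  simp only [PForm.andF, PForm.neg, PForm.imp.injEq, and_true]

lemma mem_vars_andF {k : ℕ} {a b : PForm} :
    k ∈ (a.andF b).vars ↔ k ∈ a.vars ∨ k ∈ b.vars := by
  simp [PForm.andF, PForm.neg, PForm.vars]

lemma listConj_ne_var (l : List PForm) (n : ℕ) : listConj l ≠ PForm.var n := by
  cases l <;> simp [listConj, PForm.tru, PForm.andF, PForm.neg]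

lemma andF_var_ne_listConj (x : PForm) (k : ℕ) (l : List PForm) :
    x.andF (PForm.var k) ≠ listConj l := by
  intro h
  cases l with
  | nil => simp [listConj, PForm.tru, PForm.andF, PForm.neg] at h
  | cons φ t =>
    rw [listConj] at h
    rw [andF_inj] at h
    exact listConj_ne_var t k h.2.symm

lemma cV_inj {N u m i i' : ℕ} (h : cV N u m i = cV N u m i') : i = i' := by
  simp only [cV] at h; omega

lemma oV_inj {N u m j j' : ℕ} (h : oV N u m j = oV N u m j') : j = j' := by
  simp only [oV] at h; omega

lemma cV_ne_oV {N u m i j : ℕ} (hi : i < m) : cV N u m i ≠ oV N u m j := by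
  simp only [cV, oV]; omega

lemma aFml_inj (D : List Default) (N u : ℕ) {i i' : ℕ}
    (h : aFml D N u i = aFml D N u i') : i = i' := by
  rw [aFml, aFml, andF_inj] at h
  rw [andF_inj] at h
  exact cV_inj (by injection h.2.1)

lemma nFml_inj (D : List Default) (N u : ℕ) {i i' : ℕ}
    (h : nFml D N u i = nFml D N u i') : i = i' := by
  rw [nFml, nFml, andF_inj] at h
  have := h.1
  simp only [PForm.neg, PForm.imp.injEq] at this
  exact cV_inj (by injection this.1)

lemma aFml_ne_nFml (D : List Default) (N u : ℕ) (i i' : ℕ) :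
    aFml D N u i ≠ nFml D N u i' := by
  intro h
  rw [aFml, nFml, andF_inj] at h
  have := h.2
  simp [PForm.andF, PForm.neg] at this

lemma aFml_ne_vFml (D : List Default) (N u : ℕ) (δ : ℕ → PForm) {i : ℕ} (j : ℕ)
    (hi : i < D.length) : aFml D N u i ≠ vFml N u D.length δ j := by
  intro h
  rw [aFml, vFml, andF_inj] at h
  have := h.2
  rw [andF_inj] at this
  exact cV_ne_oV hi (by injection this.1)

lemma aFml_ne_gFml (D : List Default) (N u : ℕ) (i j : ℕ) :
    aFml D N u i ≠ gFml N u D.length j := by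
  intro h
  rw [aFml, gFml, andF_inj] at h
  have := h.2
  simp [PForm.andF, PForm.neg] at this

lemma aFml_ne_z1Fml (D : List Default) (W : List PForm) (N u : ℕ) (i : ℕ) :
    aFml D N u i ≠ z1Fml D W N u := by
  intro h
  rw [aFml, z1Fml, andF_inj] at h
  exact andF_var_ne_listConj _ _ _ h.2

lemma nFml_ne_vFml (D : List Default) (N u : ℕ) (δ : ℕ → PForm) (i j : ℕ) :
    nFml D N u i ≠ vFml N u D.length δ j := by
  intro h
  rw [nFml, vFml, andF_inj] at h
  have := h.2
  simp [PForm.andF, PForm.neg] at this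

lemma nFml_ne_gFml (D : List Default) (N u : ℕ) {i : ℕ} (j : ℕ) (hi : i < D.length) :
    nFml D N u i ≠ gFml N u D.length j := by
  intro h
  rw [nFml, gFml, andF_inj] at h
  have := h.1
  simp only [PForm.neg, PForm.imp.injEq] at this
  exact cV_ne_oV hi (by injection this.1)

lemma nFml_ne_z1Fml (D : List Default) (W : List PForm) (N u : ℕ) (i : ℕ) :
    nFml D N u i ≠ z1Fml D W N u := by
  intro h
  rw [nFml, z1Fml, andF_inj] at h
  exact (listConj_ne_var _ _ h.2.symm)

lemma vFml_inj (N u m : ℕ) (δ : ℕ → PForm) {j j' : ℕ}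
    (h : vFml N u m δ j = vFml N u m δ j') : j = j' := by
  rw [vFml, vFml, andF_inj] at h
  have := h.2
  rw [andF_inj] at this
  exact oV_inj (by injection this.1)

lemma gFml_inj (N u m : ℕ) {j j' : ℕ} (h : gFml N u m j = gFml N u m j') : j = j' := by
  rw [gFml, gFml, andF_inj] at h
  have := h.1
  simp only [PForm.neg, PForm.imp.injEq] at this
  exact oV_inj (by injection this.1)

lemma vFml_ne_gFml (N u m : ℕ) (δ : ℕ → PForm) (j j' : ℕ) :
    vFml N u m δ j ≠ gFml N u m j' := by
  intro h
  rw [vFml, gFml, andF_inj] at h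
  have := h.2
  simp [PForm.andF, PForm.neg] at this

lemma vFml_ne_z1Fml (D : List Default) (W : List PForm) (N u : ℕ) (δ : ℕ → PForm) (j : ℕ) :
    vFml N u D.length δ j ≠ z1Fml D W N u := by
  intro h
  rw [vFml, z1Fml, andF_inj] at h
  exact andF_var_ne_listConj _ _ _ h.2

lemma gFml_ne_z1Fml (D : List Default) (W : List PForm) (N u : ℕ) (j : ℕ) :
    gFml N u D.length j ≠ z1Fml D W N u := by
  intro h
  rw [gFml, z1Fml, andF_inj] at h
  exact (listConj_ne_var _ _ h.2.symm)

section NeF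

variable {N u : ℕ} {F : PForm} (hF : ∀ k ∈ F.vars, k < N)

lemma cV_not_lt_N (u m i : ℕ) : ¬ (cV N u m i < N) := by
  have := N_le_band N u
  simp only [cV]; omega

lemma oV_not_lt_N (u m j : ℕ) : ¬ (oV N u m j < N) := by
  have := N_le_band N u
  simp only [oV]; omega

include hF in
lemma aFml_ne_F (D : List Default) (i : ℕ) : aFml D N u i ≠ F := by
  intro h
  apply cV_not_lt_N (N := N) u D.length i
  apply hF
  rw [← h]
  rw [aFml]
  rw [mem_vars_andF]
  right
  rw [mem_vars_andF]
  left
  simp [PForm.vars]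

include hF in
lemma nFml_ne_F (D : List Default) (i : ℕ) : nFml D N u i ≠ F := by
  intro h
  apply cV_not_lt_N (N := N) u D.length i
  apply hF
  rw [← h, nFml, mem_vars_andF]
  left
  simp [PForm.neg, PForm.vars]

include hF in
lemma vFml_ne_F (m : ℕ) (δ : ℕ → PForm) (j : ℕ) : vFml N u m δ j ≠ F := by
  intro h
  apply oV_not_lt_N (N := N) u m j
  apply hF
  rw [← h, vFml, mem_vars_andF]
  right
  rw [mem_vars_andF]
  left
  simp [PForm.vars]

include hF in
lemma gFml_ne_F (m : ℕ) (j : ℕ) : gFml N u m j ≠ F := by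
  intro h
  apply oV_not_lt_N (N := N) u m j
  apply hF
  rw [← h, gFml, mem_vars_andF]
  left
  simp [PForm.neg, PForm.vars]

end NeF

/-! #### Parts, membership and Nodup -/

lemma def_ne_of_cons_ne {d d' : Default} (h : d.cons ≠ d'.cons) : d ≠ d' := by
  intro he; exact h (by rw [he])

lemma Lidx_lt {i : ℕ} (hsub : ∀ d ∈ Pr', d ∈ D) (hi : i ∈ Lidx D Pr') : i < D.length := by
  simp only [Lidx, List.mem_map] at hi
  obtain ⟨d, hd, rfl⟩ := hi
  exact List.idxOf_lt_length_iff.2 (hsub d hd)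

lemma aDef_mem_Apart {i : ℕ} (hi : i ∈ Lidx D Pr') :
    aDef D N u i ∈ Apart D N u Pr' := List.mem_map.2 ⟨i, hi, rfl⟩

lemma nDef_mem_Npart {i : ℕ} (hi : i < D.length) (hni : i ∉ Lidx D Pr') :
    nDef D N u i ∈ Npart D N u Pr' :=
  List.mem_map.2 ⟨i, List.mem_filter.2 ⟨List.mem_range.2 hi, by simpa using hni⟩, rfl⟩

lemma vg_mem_VGpart {j : ℕ} (hj : j < u) :
    cond (oB D δ Pr' j) (vDef N u D.length δ j) (gDef N u D.length δ j)
      ∈ VGpart D N u δ Pr' := List.mem_map.2 ⟨j, List.mem_range.2 hj, rfl⟩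

lemma mem_Apart_iff {d : Default} :
    d ∈ Apart D N u Pr' ↔ ∃ i ∈ Lidx D Pr', d = aDef D N u i := by
  simp only [Apart, List.mem_map]
  constructor
  · rintro ⟨i, hi, rfl⟩; exact ⟨i, hi, rfl⟩
  · rintro ⟨i, hi, rfl⟩; exact ⟨i, hi, rfl⟩

lemma mem_Npart_iff {d : Default} :
    d ∈ Npart D N u Pr' ↔ ∃ i, i < D.length ∧ i ∉ Lidx D Pr' ∧ d = nDef D N u i := by
  simp only [Npart, List.mem_map, List.mem_filter, List.mem_range, decide_eq_true_eq]
  constructor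
  · rintro ⟨i, ⟨hi, hni⟩, rfl⟩; exact ⟨i, hi, hni, rfl⟩
  · rintro ⟨i, hi, hni, rfl⟩; exact ⟨i, ⟨hi, hni⟩, rfl⟩

lemma mem_VGpart_iff {d : Default} :
    d ∈ VGpart D N u δ Pr' ↔ ∃ j, j < u ∧
      d = cond (oB D δ Pr' j) (vDef N u D.length δ j) (gDef N u D.length δ j) := by
  simp only [VGpart, List.mem_map, List.mem_range]
  constructor
  · rintro ⟨j, hj, rfl⟩; exact ⟨j, hj, rfl⟩
  · rintro ⟨j, hj, rfl⟩; exact ⟨j, hj, rfl⟩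

lemma Lidx_nodup (hD : D.Nodup) (hnd : Pr'.Nodup) (hsub : ∀ d ∈ Pr', d ∈ D) :
    (Lidx D Pr').Nodup := by
  apply List.Nodup.map_on _ hnd
  intro d hd d' hd' h
  have h1 : origD D (D.idxOf d) = d := origD_indexOf D (hsub d hd)
  have h2 : origD D (D.idxOf d') = d' := origD_indexOf D (hsub d' hd')
  rw [← h1, ← h2, h]

lemma SimPr_nodup (hD : D.Nodup) (hnd : Pr'.Nodup) (hsub : ∀ d ∈ Pr', d ∈ D)
    (hF : ∀ k ∈ F.vars, k < N) : (SimPr D W N u δ C F Pr').Nodup := by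
  rw [SimPr]
  rw [List.nodup_append', List.nodup_append', List.nodup_append']
  refine ⟨?_, ⟨?_, ⟨?_, ?_, ?_⟩, ?_⟩, ?_⟩
  · -- A nodup
    exact (Lidx_nodup D Pr' hD hnd hsub).map_on (by
      intro i hi i' hi' h
      exact aFml_inj D N u (congrArg Default.cons h))
  · -- N nodup
    refine List.Nodup.map_on ?_ (List.Nodup.filter _ List.nodup_range)
    intro i hi i' hi' h
    exact nFml_inj D N u (congrArg Default.cons h)
  · -- VG nodup
    refine List.Nodup.map_on ?_ List.nodup_range
    intro j hj j' hj' h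
    have hc := congrArg Default.cons h
    cases ho : oB D δ Pr' j <;> cases ho' : oB D δ Pr' j' <;>
      rw [ho, ho'] at hc <;> simp only [cond_true, cond_false] at hc
    · exact gFml_inj N u D.length hc
    · exact absurd hc.symm (vFml_ne_gFml N u D.length δ j' j)
    · exact absurd hc (vFml_ne_gFml N u D.length δ j j')
    · exact vFml_inj N u D.length δ hc
  · -- Z nodup
    rw [Zpart]
    split
    · simp
    · split <;> simp
  · -- VG disjoint Z
    intro d hd hz
    rw [mem_VGpart_iff] at hd
    obtain ⟨j, hj, rfl⟩ := hd
    rw [Zpart] at hz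
    split at hz
    · simp only [List.mem_singleton] at hz
      have hc := congrArg Default.cons hz
      cases ho : oB D δ Pr' j <;> rw [ho] at hc <;> simp only [cond_true, cond_false] at hc
      · exact gFml_ne_z1Fml D W N u j hc
      · exact vFml_ne_z1Fml D W N u δ j hc
    · split at hz
      · simp only [List.mem_singleton] at hz
        have hc := congrArg Default.cons hz
        cases ho : oB D δ Pr' j <;> rw [ho] at hc <;> simp only [cond_true, cond_false] at hc
        · exact gFml_ne_F hF D.length j hc
        · exact vFml_ne_F hF D.length δ j hc
      · simp at hz
  · -- N disjoint (VG ++ Z)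
    intro d hd hz
    rw [mem_Npart_iff] at hd
    obtain ⟨i, hi, hni, rfl⟩ := hd
    rw [List.mem_append] at hz
    rcases hz with hz | hz
    · rw [mem_VGpart_iff] at hz
      obtain ⟨j, hj, he⟩ := hz
      have hc := congrArg Default.cons he
      cases ho : oB D δ Pr' j <;> rw [ho] at hc <;> simp only [cond_true, cond_false] at hc
      · exact nFml_ne_gFml D N u j hi hc
      · exact nFml_ne_vFml D N u δ i j hc
    · rw [Zpart] at hz
      split at hz
      · simp only [List.mem_singleton] at hz
        exact nFml_ne_z1Fml D W N u i (congrArg Default.cons hz)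
      · split at hz
        · simp only [List.mem_singleton] at hz
          exact nFml_ne_F hF D i (congrArg Default.cons hz)
        · simp at hz
  · -- A disjoint (N ++ (VG ++ Z))
    intro d hd hz
    rw [mem_Apart_iff] at hd
    obtain ⟨i, hi, rfl⟩ := hd
    have him : i < D.length := Lidx_lt D Pr' hsub hi
    rw [List.mem_append] at hz
    rcases hz with hz | hz
    · rw [mem_Npart_iff] at hz
      obtain ⟨i', _, _, he⟩ := hz
      exact aFml_ne_nFml D N u i i' (congrArg Default.cons he)
    rw [List.mem_append] at hz
    rcases hz with hz | hz
    · rw [mem_VGpart_iff] at hz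
      obtain ⟨j, hj, he⟩ := hz
      have hc := congrArg Default.cons he
      cases ho : oB D δ Pr' j <;> rw [ho] at hc <;> simp only [cond_true, cond_false] at hc
      · exact aFml_ne_gFml D N u i j hc
      · exact aFml_ne_vFml D N u δ j him hc
    · rw [Zpart] at hz
      split at hz
      · simp only [List.mem_singleton] at hz
        exact aFml_ne_z1Fml D W N u i (congrArg Default.cons hz)
      · split at hz
        · simp only [List.mem_singleton] at hz
          exact aFml_ne_F hF D i (congrArg Default.cons hz)
        · simp at hz

/-- Every default of the constructed process belongs to the simulating theory. -/
lemma SimPr_sub_simD (hsub : ∀ d ∈ Pr', d ∈ D) :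
    ∀ d ∈ SimPr D W N u δ C F Pr', d ∈ simD D W N u δ C F := by
  intro d hd
  simp only [SimPr, List.mem_append] at hd
  simp only [simD, List.mem_append, List.mem_map, List.mem_range]
  rcases hd with hd | hd | hd | hd
  · rw [mem_Apart_iff] at hd
    obtain ⟨i, hi, rfl⟩ := hd
    exact Or.inl (Or.inl (Or.inl (Or.inl ⟨i, Lidx_lt D Pr' hsub hi, rfl⟩)))
  · rw [mem_Npart_iff] at hd
    obtain ⟨i, hi, _, rfl⟩ := hd
    exact Or.inl (Or.inl (Or.inl (Or.inr ⟨i, hi, rfl⟩)))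
  · rw [mem_VGpart_iff] at hd
    obtain ⟨j, hj, rfl⟩ := hd
    cases ho : oB D δ Pr' j
    · exact Or.inl (Or.inr ⟨j, hj, rfl⟩)
    · exact Or.inl (Or.inl (Or.inr ⟨j, hj, rfl⟩))
  · rw [Zpart] at hd
    split at hd
    · simp only [List.mem_singleton] at hd
      subst hd; right; simp
    · split at hd
      · simp only [List.mem_singleton] at hd
        subst hd; right; simp
      · simp at hd

/-! #### Precondition entailments -/

lemma Apart_length : (Apart D N u Pr').length = Pr'.length := by
  simp [Apart, Lidx]

lemma Apre (hPr' : IsProcess D W Pr') {k : ℕ} (hk : k < (Apart D N u Pr').length) :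
    ThEntails (procTh (simW W N) ((Apart D N u Pr').take k))
      ((Apart D N u Pr')[k].prec) := by
  have hsub := hPr'.2.1
  have hkP : k < Pr'.length := by rwa [Apart_length] at hk
  have horig : origD D (D.idxOf (Pr'[k])) = Pr'[k] :=
    origD_indexOf D (hsub _ (List.getElem_mem hkP))
  have hgetA : (Apart D N u Pr')[k] = aDef D N u (D.idxOf Pr'[k]) := by
    simp [Apart, Lidx]
  rw [hgetA]
  show ThEntails _ ((origD D (D.idxOf Pr'[k])).prec.rename (ρ0 N))
  rw [horig]
  have hproc := hPr'.2.2.2 ⟨k, hkP⟩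
  simp only [List.get_eq_getElem] at hproc
  apply entails_rename_transfer W N (Q := Pr'.take k) _ _ hproc
  · intro ψ hψ
    exact entails_of_mem (W_mem_procTh (by
      simp only [simW, List.mem_map]; exact ⟨ψ, hψ, rfl⟩))
  · intro d hd
    have hdP : d ∈ Pr' := List.mem_of_mem_take hd
    have hmem : aDef D N u (D.idxOf d) ∈ (Apart D N u Pr').take k := by
      rw [Apart, Lidx, ← List.map_take, ← List.map_take]
      exact List.mem_map.2 ⟨D.idxOf d, List.mem_map.2 ⟨d, hd, rfl⟩, rfl⟩
    have hc : ThEntails (procTh (simW W N) ((Apart D N u Pr').take k))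
        (aFml D N u (D.idxOf d)) := entails_of_mem (cons_mem_procTh hmem)
    rw [aFml] at hc
    have := entails_andF_left hc
    rwa [origD_indexOf D (hsub d hdP)] at this

lemma VGpre (hD : D.Nodup) (hsub : ∀ d ∈ Pr', d ∈ D) (ht : TestVarsOK D.length N u δ C)
    {d : Default} (hd : d ∈ VGpart D N u δ Pr') {Γ : Th}
    (hΓA : ∀ i ∈ Lidx D Pr', aFml D N u i ∈ Γ)
    (hΓN : ∀ i, i < D.length → i ∉ Lidx D Pr' → nFml D N u i ∈ Γ) :
    ThEntails Γ d.prec := by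
  rw [mem_VGpart_iff] at hd
  obtain ⟨j, hj, rfl⟩ := hd
  intro v hv
  have hpin := pin_ce D N u Pr' hD hsub (v := v)
    (fun i hi => hv _ (hΓA i hi)) (fun i hi hni => hv _ (hΓN i hi hni))
  have hE : (Econj N u D.length).eval v = true :=
    eval_Econj_of_pin D N u (fun i hi => (hpin i hi).2)
  cases ho : oB D δ Pr' j
  · show ((Econj N u D.length).andF (instδ N u D.length δ j).neg).eval v = true
    rw [PForm.eval_andF, hE, PForm.eval_neg]
    have hcons : ¬ ThConsistent {testAt δ (memOf D Pr') j} := by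
      rw [← oB_true_iff D δ Pr' j, ho]; simp
    rw [eval_instδ_pinned D N u δ C Pr' ht hj (fun i hi => (hpin i hi).1)]
    rw [not_consistent_eval hcons]
    rfl
  · show (Econj N u D.length).eval v = true
    exact hE

lemma Zpre (hD : D.Nodup) (hsub : ∀ d ∈ Pr', d ∈ D) (ht : TestVarsOK D.length N u δ C)
    {d : Default} (hd : d ∈ Zpart D W N u δ C F Pr') {Γ : Th}
    (hΓA : ∀ i ∈ Lidx D Pr', aFml D N u i ∈ Γ)
    (hΓN : ∀ i, i < D.length → i ∉ Lidx D Pr' → nFml D N u i ∈ Γ)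
    (hΓVG : ∀ j, j < u → (cond (oB D δ Pr' j) (vFml N u D.length δ j)
      (gFml N u D.length j)) ∈ Γ) :
    ThEntails Γ d.prec := by
  intro v hv
  have hpin := pin_ce D N u Pr' hD hsub (v := v)
    (fun i hi => hv _ (hΓA i hi)) (fun i hi hni => hv _ (hΓN i hi hni))
  have hpin2 := pin_ot D N u δ Pr' (v := v) (fun j hj => hv _ (hΓVG j hj))
  have hE : (Econj N u D.length).eval v = true :=
    eval_Econj_of_pin D N u (fun i hi => (hpin i hi).2)
  have hT : (Tconj N u D.length).eval v = true :=
    eval_Tconj_of_pin D N u (fun j hj => (hpin2 j hj).2)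
  have hiC := eval_instC_pinned D N u δ C Pr' ht
    (fun i hi => (hpin i hi).1) (fun j hj => (hpin2 j hj).1)
  rw [Zpart] at hd
  split at hd
  · rename_i hz
    simp only [List.mem_singleton] at hd
    subst hd
    show (((Econj N u D.length).andF (Tconj N u D.length)).andF
      (instC N u D.length C)).eval v = true
    rw [PForm.eval_andF, PForm.eval_andF, hE, hT, hiC]
    rw [circHolds_eval_iff] at hz
    rw [hz]
    rfl
  · split at hd
    · rename_i hz _
      simp only [List.mem_singleton] at hd
      subst hd
      show (((Econj N u D.length).andF (Tconj N u D.length)).andF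
        (instC N u D.length C).neg).eval v = true
      rw [PForm.eval_andF, PForm.eval_andF, PForm.eval_neg, hE, hT, hiC]
      rw [circHolds_eval_iff] at hz
      rw [Bool.not_eq_true] at hz
      rw [hz]
      rfl
    · simp at hd

/-! #### `Omap` computation -/

lemma aDef_inj {i i' : ℕ} (h : aDef D N u i = aDef D N u i') : i = i' :=
  aFml_inj D N u (congrArg Default.cons h)

lemma find?_aDef {i : ℕ} (hi : i < D.length) :
    ((List.range D.length).find? fun i' => decide (aDef D N u i = aDef D N u i'))
      = some i := by
  cases h : (List.range D.length).find? fun i' => decide (aDef D N u i = aDef D N u i') with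
  | none =>
    exfalso
    rw [List.find?_eq_none] at h
    exact h i (List.mem_range.2 hi) (by simp)
  | some j =>
    have := List.find?_some h
    simp only [decide_eq_true_eq] at this
    rw [aDef_inj D N u this]

lemma filterMap_eq_map_of {α β : Type} (f : α → Option β) (g : α → β) (l : List α)
    (h : ∀ a ∈ l, f a = some (g a)) : l.filterMap f = l.map g := by
  induction l with
  | nil => rfl
  | cons a t ih =>
    rw [List.filterMap_cons, h a (by simp), List.map_cons,
      ih (fun a ha => h a (by simp [ha]))]

lemma filterMap_eq_nil_of {α β : Type} (f : α → Option β) (l : List α)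
    (h : ∀ a ∈ l, f a = none) : l.filterMap f = [] := by
  induction l with
  | nil => rfl
  | cons a t ih =>
    rw [List.filterMap_cons, h a (by simp), ih (fun a ha => h a (by simp [ha]))]

/-- The `Omap` of the constructed process recovers the original process. -/
lemma Omap_SimPr (hF : ∀ k ∈ F.vars, k < N) (hsub : ∀ d ∈ Pr', d ∈ D) :
    Omap D N u (SimPr D W N u δ C F Pr') = Pr' := by
  rw [Omap, SimPr]
  rw [List.filterMap_append, List.filterMap_append, List.filterMap_append]
  have hA : (Apart D N u Pr').filterMap (fun d =>
      ((List.range D.length).find? fun i => decide (d = aDef D N u i)).map (origD D))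
      = Pr' := by
    rw [Apart, List.filterMap_map]
    rw [filterMap_eq_map_of _ (origD D) _ (by
      intro i hi
      simp only [Function.comp]
      rw [find?_aDef D N u (Lidx_lt D Pr' hsub hi)]
      rfl)]
    rw [Lidx, List.map_map]
    have hcg : ∀ d ∈ Pr', (origD D ∘ fun d => List.idxOf d D) d = id d :=
      fun d hd => origD_indexOf D (hsub d hd)
    rw [List.map_congr_left hcg, List.map_id]
  have hnone : ∀ (d : Default), (∀ i, i < D.length → d ≠ aDef D N u i) →
      ((List.range D.length).find? fun i => decide (d = aDef D N u i)).map (origD D)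
        = none := by
    intro d hd
    rw [List.find?_eq_none.2 (by
      intro i hi
      simp only [decide_eq_true_eq]
      exact hd i (List.mem_range.1 hi))]
    rfl
  have hN : (Npart D N u Pr').filterMap (fun d =>
      ((List.range D.length).find? fun i => decide (d = aDef D N u i)).map (origD D))
      = [] := by
    apply filterMap_eq_nil_of
    intro d hd
    rw [mem_Npart_iff] at hd
    obtain ⟨i, hi, _, rfl⟩ := hd
    apply hnone
    intro i' _ he
    exact aFml_ne_nFml D N u i' i (congrArg Default.cons he).symm
  have hVG : (VGpart D N u δ Pr').filterMap (fun d =>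
      ((List.range D.length).find? fun i => decide (d = aDef D N u i)).map (origD D))
      = [] := by
    apply filterMap_eq_nil_of
    intro d hd
    rw [mem_VGpart_iff] at hd
    obtain ⟨j, hj, rfl⟩ := hd
    apply hnone
    intro i' hi' he
    have hc := congrArg Default.cons he
    cases ho : oB D δ Pr' j <;> rw [ho] at hc <;> simp only [cond_true, cond_false] at hc
    · exact aFml_ne_gFml D N u i' j hc.symm
    · exact aFml_ne_vFml D N u δ j hi' hc.symm
  have hZ : (Zpart D W N u δ C F Pr').filterMap (fun d =>
      ((List.range D.length).find? fun i => decide (d = aDef D N u i)).map (origD D))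
      = [] := by
    apply filterMap_eq_nil_of
    intro d hd
    rw [Zpart] at hd
    split at hd
    · simp only [List.mem_singleton] at hd
      subst hd
      apply hnone
      intro i' _ he
      exact aFml_ne_z1Fml D W N u i' (congrArg Default.cons he).symm
    · split at hd
      · simp only [List.mem_singleton] at hd
        subst hd
        apply hnone
        intro i' _ he
        exact aFml_ne_F hF D i' (congrArg Default.cons he).symm
      · simp at hd
  rw [hA, hN, hVG, hZ]
  simp

/-! #### Assembly -/

lemma mem_take_of_prefix {α : Type} {l1 l2 : List α} {n : ℕ} (h : l1.length ≤ n) {a : α}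
    (ha : a ∈ l1) : a ∈ (l1 ++ l2).take n := by
  rw [List.take_append, List.take_of_length_le h]
  exact List.mem_append_left _ ha

lemma aDef_mem_SimPr {i : ℕ} (hi : i ∈ Lidx D Pr') :
    aDef D N u i ∈ SimPr D W N u δ C F Pr' :=
  List.mem_append_left _ (aDef_mem_Apart D N u Pr' hi)

lemma nDef_mem_SimPr {i : ℕ} (hi : i < D.length) (hni : i ∉ Lidx D Pr') :
    nDef D N u i ∈ SimPr D W N u δ C F Pr' :=
  List.mem_append_right _ (List.mem_append_left _ (nDef_mem_Npart D N u Pr' hi hni))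

lemma vg_mem_SimPr {j : ℕ} (hj : j < u) :
    cond (oB D δ Pr' j) (vDef N u D.length δ j) (gDef N u D.length δ j)
      ∈ SimPr D W N u δ C F Pr' :=
  List.mem_append_right _ (List.mem_append_right _
    (List.mem_append_left _ (vg_mem_VGpart D N u δ Pr' hj)))

lemma z1_mem_SimPr (hz : circHolds C (oB D δ Pr') (memOf D Pr')) :
    z1Def D W N u C ∈ SimPr D W N u δ C F Pr' := by
  refine List.mem_append_right _ (List.mem_append_right _ (List.mem_append_right _ ?_))
  rw [Zpart, if_pos hz]
  simp

lemma z2_mem_SimPr (hz : ¬ circHolds C (oB D δ Pr') (memOf D Pr'))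
    (hFc : ThConsistent {F}) :
    z2Def D N u C F ∈ SimPr D W N u δ C F Pr' := by
  refine List.mem_append_right _ (List.mem_append_right _ (List.mem_append_right _ ?_))
  rw [Zpart, if_neg hz, if_pos hFc]
  simp

lemma vg_cons (j : ℕ) :
    (cond (oB D δ Pr' j) (vDef N u D.length δ j) (gDef N u D.length δ j)).cons
      = cond (oB D δ Pr' j) (vFml N u D.length δ j) (gFml N u D.length j) := by
  cases oB D δ Pr' j <;> rfl

/-- Pinning of the control variables for any model of the full constructed process. -/
lemma pin_SimPr (hD : D.Nodup) (hsub : ∀ d ∈ Pr', d ∈ D) {v : ℕ → Bool}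
    (hv : Models v (procTh (simW W N) (SimPr D W N u δ C F Pr'))) :
    (∀ i, i < D.length →
        v (cV N u D.length i) = memOf D Pr' i ∧ v (eV N u D.length i) = true) ∧
      (∀ j, j < u →
        v (oV N u D.length j) = oB D δ Pr' j ∧ v (tV N u D.length j) = true) := by
  constructor
  · apply pin_ce D N u Pr' hD hsub
    · intro i hi
      exact hv _ (cons_mem_procTh (aDef_mem_SimPr D W N u δ C F Pr' hi))
    · intro i hi hni
      exact hv _ (cons_mem_procTh (nDef_mem_SimPr D W N u δ C F Pr' hi hni))
  · apply pin_ot D N u δ Pr'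
    intro j hj
    have := hv _ (cons_mem_procTh (vg_mem_SimPr D W N u δ C F Pr' hj))
    rwa [vg_cons] at this

/-- Existence of a suitable base valuation. -/
lemma exists_base {v0 : ℕ → Bool} (hv0 : Models v0 (procTh W Pr')) :
    ∃ b : ℕ → Bool, (circHolds C (oB D δ Pr') (memOf D Pr') → Models b (procTh W Pr')) ∧
      (¬ circHolds C (oB D δ Pr') (memOf D Pr') → ThConsistent {F} →
        F.eval b = true) := by
  by_cases hz : circHolds C (oB D δ Pr') (memOf D Pr')
  · exact ⟨v0, fun _ => hv0, fun h => absurd hz h⟩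
  · by_cases hFc : ThConsistent {F}
    · exact ⟨hFc.choose, fun h => absurd h hz,
        fun _ _ => models_singleton.1 hFc.choose_spec⟩
    · exact ⟨v0, fun h => absurd h hz, fun _ h => absurd h hFc⟩

lemma SimPr_isProcess (hD : D.Nodup) (hv : VarsBelow D W N)
    (ht : TestVarsOK D.length N u δ C) (hF : ∀ k ∈ F.vars, k < N)
    (hPr' : IsProcess D W Pr') :
    IsProcess (simD D W N u δ C F) (simW W N) (SimPr D W N u δ C F Pr') := by
  obtain ⟨hnd, hsub, hcons', hpre⟩ := hPr'
  refine ⟨SimPr_nodup D W N u δ C F Pr' hD hnd hsub hF,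
    SimPr_sub_simD D W N u δ C F Pr' hsub, ?_, ?_⟩
  · obtain ⟨v0, hv0⟩ := hcons'
    obtain ⟨b, hb1, hb2⟩ := exists_base D W δ C F Pr' hv0
    exact ⟨_, bigV_models D W N u δ C F Pr' hD hv ht hF hsub b v0 hv0 hb1 hb2⟩
  · rintro ⟨n, hn⟩
    rw [List.get_eq_getElem]
    simp only
    have hlen : (SimPr D W N u δ C F Pr').length
        = (Apart D N u Pr').length + ((Npart D N u Pr').length
          + ((VGpart D N u δ Pr').length + (Zpart D W N u δ C F Pr').length)) := by
      simp [SimPr]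
    by_cases h1 : n < (Apart D N u Pr').length
    · have htake : (SimPr D W N u δ C F Pr').take n = (Apart D N u Pr').take n := by
        rw [SimPr, List.take_append]
        have h0 : n - (Apart D N u Pr').length = 0 := by omega
        rw [h0]
        simp
      have hget : (SimPr D W N u δ C F Pr')[n] = (Apart D N u Pr')[n] :=
        List.getElem_append_left h1
      rw [htake, hget]
      exact Apre D W N u Pr' ⟨hnd, hsub, hcons', hpre⟩ h1
    · have h1' : (Apart D N u Pr').length ≤ n := le_of_not_gt h1
      have hget : (SimPr D W N u δ C F Pr')[n]
          = (Npart D N u Pr' ++ (VGpart D N u δ Pr' ++ Zpart D W N u δ C F Pr'))[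
              n - (Apart D N u Pr').length]'(by rw [hlen] at hn; simp; omega) :=
        List.getElem_append_right h1'
      by_cases h2 : n - (Apart D N u Pr').length < (Npart D N u Pr').length
      · have hmem : (SimPr D W N u δ C F Pr')[n] ∈ Npart D N u Pr' := by
          rw [hget, List.getElem_append_left h2]
          exact List.getElem_mem _
        obtain ⟨i', _, _, he⟩ := (mem_Npart_iff D N u Pr').1 hmem
        rw [he]
        exact entails_tru _
      · have h2' : (Npart D N u Pr').length ≤ n - (Apart D N u Pr').length :=
          le_of_not_gt h2
        have hAN : ∀ i ∈ Lidx D Pr',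
            aFml D N u i ∈ procTh (simW W N) ((SimPr D W N u δ C F Pr').take n) := by
          intro i hi
          apply cons_mem_procTh (d := aDef D N u i)
          rw [SimPr, ← List.append_assoc]
          apply mem_take_of_prefix (by rw [List.length_append]; omega)
          exact List.mem_append_left _ (aDef_mem_Apart D N u Pr' hi)
        have hNN : ∀ i, i < D.length → i ∉ Lidx D Pr' →
            nFml D N u i ∈ procTh (simW W N) ((SimPr D W N u δ C F Pr').take n) := by
          intro i hi hni
          apply cons_mem_procTh (d := nDef D N u i)
          rw [SimPr, ← List.append_assoc]
          apply mem_take_of_prefix (by rw [List.length_append]; omega)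
          exact List.mem_append_right _ (nDef_mem_Npart D N u Pr' hi hni)
        by_cases h3 : n - (Apart D N u Pr').length - (Npart D N u Pr').length
            < (VGpart D N u δ Pr').length
        · have hmem : (SimPr D W N u δ C F Pr')[n] ∈ VGpart D N u δ Pr' := by
            rw [hget, List.getElem_append_right h2', List.getElem_append_left h3]
            exact List.getElem_mem _
          exact VGpre D N u δ C Pr' hD hsub ht hmem hAN hNN
        · have h3' : (VGpart D N u δ Pr').length
              ≤ n - (Apart D N u Pr').length - (Npart D N u Pr').length :=
            le_of_not_gt h3
          have hmem : (SimPr D W N u δ C F Pr')[n] ∈ Zpart D W N u δ C F Pr' := by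
            rw [hget, List.getElem_append_right h2', List.getElem_append_right h3']
            exact List.getElem_mem _
          apply Zpre D W N u δ C F Pr' hD hsub ht hmem hAN hNN
          intro j hj
          have hc := vg_cons D N u δ Pr' j
          rw [← hc]
          apply cons_mem_procTh
          rw [SimPr, ← List.append_assoc, ← List.append_assoc]
          apply mem_take_of_prefix (by
            rw [List.length_append, List.length_append]; omega)
          exact List.mem_append_right _ (vg_mem_VGpart D N u δ Pr' hj)

lemma just_eq_cons_SimPr : ∀ d ∈ SimPr D W N u δ C F Pr', d.just = d.cons := by
  intro d hd
  simp only [SimPr, List.mem_append] at hd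
  rcases hd with hd | hd | hd | hd
  · obtain ⟨i, _, rfl⟩ := (mem_Apart_iff D N u Pr').1 hd; rfl
  · obtain ⟨i, _, _, rfl⟩ := (mem_Npart_iff D N u Pr').1 hd; rfl
  · obtain ⟨j, _, rfl⟩ := (mem_VGpart_iff D N u δ Pr').1 hd
    cases oB D δ Pr' j <;> rfl
  · rw [Zpart] at hd
    split at hd
    · simp only [List.mem_singleton] at hd; subst hd; rfl
    · split at hd
      · simp only [List.mem_singleton] at hd; subst hd; rfl
      · simp at hd

lemma SimPr_locSucc
    (hcons : ThConsistent (procTh (simW W N) (SimPr D W N u δ C F Pr'))) :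
    LocallySuccessful (simW W N) (SimPr D W N u δ C F Pr') := by
  intro d hd
  obtain ⟨v, hv⟩ := hcons
  refine ⟨v, ?_⟩
  intro φ hφ
  rcases hφ with hφ | hφ
  · exact hv φ hφ
  · rw [Set.mem_singleton_iff] at hφ
    subst hφ
    rw [just_eq_cons_SimPr D W N u δ C F Pr' d hd]
    exact hv _ (cons_mem_procTh hd)

lemma SimPr_closed (hD : D.Nodup) (hv : VarsBelow D W N)
    (ht : TestVarsOK D.length N u δ C) (hF : ∀ k ∈ F.vars, k < N)
    (hPr' : IsProcess D W Pr') :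
    ReiterClosed (simD D W N u δ C F) (simW W N) (SimPr D W N u δ C F Pr') := by
  have hsub := hPr'.2.1
  obtain ⟨v0, hv0⟩ := hPr'.2.2.1
  obtain ⟨b, hb1, hb2⟩ := exists_base D W δ C F Pr' hv0
  have hVmod := bigV_models D W N u δ C F Pr' hD hv ht hF hsub b v0 hv0 hb1 hb2
  intro d hdD hdP
  simp only [simD, List.mem_append, List.mem_map, List.mem_range] at hdD
  rcases hdD with ((((⟨i, hi, rfl⟩ | ⟨i, hi, rfl⟩) | ⟨j, hj, rfl⟩) | ⟨j, hj, rfl⟩) | hz)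
  · -- aDef
    by_cases hiL : i ∈ Lidx D Pr'
    · exact absurd (aDef_mem_SimPr D W N u δ C F Pr' hiL) hdP
    · right
      rintro ⟨v, hvm⟩
      have hvΓ : Models v (procTh (simW W N) (SimPr D W N u δ C F Pr')) :=
        fun ψ h => hvm ψ (Or.inl h)
      have hjj : (aFml D N u i).eval v = true := hvm _ (Or.inr rfl)
      simp only [aFml, PForm.eval_andF, PForm.eval_var, Bool.and_eq_true] at hjj
      have hpin := (pin_SimPr D W N u δ C F Pr' hD hsub hvΓ).1 i hi
      rw [hjj.2.1] at hpin
      have : memOf D Pr' i = false := by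
        rw [← Bool.not_eq_true, memOf_eq_Lidx D Pr' hD hsub]; exact hiL
      rw [this] at hpin
      simp at hpin
  · -- nDef
    by_cases hiL : i ∈ Lidx D Pr'
    · right
      rintro ⟨v, hvm⟩
      have hvΓ : Models v (procTh (simW W N) (SimPr D W N u δ C F Pr')) :=
        fun ψ h => hvm ψ (Or.inl h)
      have hjj : (nFml D N u i).eval v = true := hvm _ (Or.inr rfl)
      simp only [nFml, PForm.eval_andF, PForm.eval_neg, PForm.eval_var, Bool.and_eq_true,
        Bool.not_eq_true'] at hjj
      have hpin := (pin_SimPr D W N u δ C F Pr' hD hsub hvΓ).1 i hi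
      rw [hjj.1] at hpin
      have : memOf D Pr' i = true := (memOf_eq_Lidx D Pr' hD hsub i).2 hiL
      rw [this] at hpin
      simp at hpin
    · exact absurd (nDef_mem_SimPr D W N u δ C F Pr' hi hiL) hdP
  · -- vDef
    cases ho : oB D δ Pr' j
    · right
      rintro ⟨v, hvm⟩
      have hvΓ : Models v (procTh (simW W N) (SimPr D W N u δ C F Pr')) :=
        fun ψ h => hvm ψ (Or.inl h)
      have hjj : (vFml N u D.length δ j).eval v = true := hvm _ (Or.inr rfl)
      simp only [vFml, PForm.eval_andF, PForm.eval_var, Bool.and_eq_true] at hjj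
      have hpin := (pin_SimPr D W N u δ C F Pr' hD hsub hvΓ).2 j hj
      rw [hjj.2.1, ho] at hpin
      simp at hpin
    · have := vg_mem_SimPr D W N u δ C F Pr' hj
      rw [ho] at this
      exact absurd this hdP
  · -- gDef
    cases ho : oB D δ Pr' j
    · have := vg_mem_SimPr D W N u δ C F Pr' hj
      rw [ho] at this
      exact absurd this hdP
    · right
      rintro ⟨v, hvm⟩
      have hvΓ : Models v (procTh (simW W N) (SimPr D W N u δ C F Pr')) :=
        fun ψ h => hvm ψ (Or.inl h)
      have hjj : (gFml N u D.length j).eval v = true := hvm _ (Or.inr rfl)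
      simp only [gFml, PForm.eval_andF, PForm.eval_neg, PForm.eval_var, Bool.and_eq_true,
        Bool.not_eq_true'] at hjj
      have hpin := (pin_SimPr D W N u δ C F Pr' hD hsub hvΓ).2 j hj
      rw [hjj.1, ho] at hpin
      simp at hpin
  · -- z-defaults
    simp only [List.mem_cons, List.mem_singleton, List.not_mem_nil, or_false] at hz
    rcases hz with rfl | rfl
    · by_cases hzc : circHolds C (oB D δ Pr') (memOf D Pr')
      · exact absurd (z1_mem_SimPr D W N u δ C F Pr' hzc) hdP
      · left
        intro hent
        have := hent _ hVmod
        show False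
        rw [show (z1Def D W N u C).prec = ((Econj N u D.length).andF
          (Tconj N u D.length)).andF (instC N u D.length C) from rfl] at this
        rw [PForm.eval_andF, eval_instC_bigV D N u δ C Pr' ht] at this
        rw [circHolds_eval_iff, Bool.not_eq_true] at hzc
        rw [hzc] at this
        simp at this
    · by_cases hzc : circHolds C (oB D δ Pr') (memOf D Pr')
      · left
        intro hent
        have := hent _ hVmod
        show False
        rw [show (z2Def D N u C F).prec = ((Econj N u D.length).andF
          (Tconj N u D.length)).andF (instC N u D.length C).neg from rfl] at this
        rw [PForm.eval_andF, PForm.eval_neg, eval_instC_bigV D N u δ C Pr' ht] at this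
        rw [circHolds_eval_iff] at hzc
        rw [hzc] at this
        simp at this
      · by_cases hFc : ThConsistent {F}
        · exact absurd (z2_mem_SimPr D W N u δ C F Pr' hzc hFc) hdP
        · right
          rintro ⟨v, hvm⟩
          apply hFc
          refine ⟨v, models_singleton.2 ?_⟩
          exact hvm _ (Or.inr rfl)

/-- Var-equivalence of the two extensions in the successful-and-closed case. -/
lemma varequiv_SimPr (hD : D.Nodup) (hv : VarsBelow D W N)
    (ht : TestVarsOK D.length N u δ C) (hF : ∀ k ∈ F.vars, k < N)
    (hPr' : IsProcess D W Pr') (hz : circHolds C (oB D δ Pr') (memOf D Pr'))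
    {φ : PForm} (hφ : ∀ k ∈ φ.vars, k < N) :
    ThEntails (procTh W Pr') φ
      ↔ ThEntails (procTh (simW W N) (SimPr D W N u δ C F Pr')) φ := by
  have hsub := hPr'.2.1
  constructor
  · intro h v hvm
    apply h
    rw [models_procTh_iff]
    have hz1 : (z1Fml D W N u).eval v = true :=
      hvm _ (cons_mem_procTh (z1_mem_SimPr D W N u δ C F Pr' hz))
    rw [z1Fml, PForm.eval_andF, Bool.and_eq_true, eval_listConj, eval_listConj] at hz1
    constructor
    · exact hz1.1
    · intro d hd
      have hiL : D.idxOf d ∈ Lidx D Pr' := List.mem_map.2 ⟨d, hd, rfl⟩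
      have him : D.idxOf d < D.length := Lidx_lt D Pr' hsub hiL
      have hmem : memOf D Pr' (D.idxOf d) = true :=
        (memOf_true_iff D Pr' _).2 ⟨him, by rw [origD_indexOf D (hsub d hd)]; exact hd⟩
      have hpin := (pin_SimPr D W N u δ C F Pr' hD hsub hvm).1 _ him
      have hφi := hz1.2 ((PForm.var (cV N u D.length (D.idxOf d))).imp
        (origD D (D.idxOf d)).cons) (by
          simp only [List.mem_map, List.mem_range]
          exact ⟨D.idxOf d, him, rfl⟩)
      rw [show ∀ a b : PForm, (a.imp b).eval v = (!a.eval v || b.eval v)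
        from fun a b => rfl] at hφi
      rw [PForm.eval_var, hpin.1, hmem] at hφi
      simp only [Bool.not_true, Bool.false_or] at hφi
      rwa [origD_indexOf D (hsub d hd)] at hφi
  · intro h v hvm
    have hVmod := bigV_models D W N u δ C F Pr' hD hv ht hF hsub v v hvm
      (fun _ => hvm) (fun hnz => absurd hz hnz)
    have := h _ hVmod
    rwa [eval_orig_bigV D N u δ Pr' hφ] at this

end Main

end Aux

open Sim in
/-- for each process `Π'` of the original theory `⟨D, W⟩` there exists a
successful and closed process `Π` of the simulating normal theory `⟨D_u^F, W_u⟩` with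
`O(Π) = Π'`; consequently every extension of `⟨D, W⟩` under the simulated regular semantics
is var-equivalent w.r.t. the original alphabet `X` to an extension of `⟨D_u^F, W_u⟩`. -/
theorem sim_lifting_and_extension_preservation (S : RegSem) (D : List Default)
    (W : List PForm) (N u : ℕ) (δ : ℕ → PForm) (C F : PForm)
    (hD : D.Nodup) (hW : ThConsistent (WSet W)) (hv : VarsBelow D W N)
    (ht : TestVarsOK D.length N u δ C) (hF : ∀ k ∈ F.vars, k < N)
    (hrep : Represents S D W u δ C) :
    (∀ Pr' : List Default, IsProcess D W Pr' →
      ∃ Pr : List Default,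
        IsProcess (simD D W N u δ C F) (simW W N) Pr ∧
        LocallySuccessful (simW W N) Pr ∧
        ReiterClosed (simD D W N u δ C F) (simW W N) Pr ∧
        Omap D N u Pr = Pr') ∧
    ∀ E : Th, S.Extension D W E →
      ∃ E' : Th, ReiterExtension (simD D W N u δ C F) (simW W N) E' ∧
        VarEquiv (Finset.range N) E E' := by
  have main : ∀ Pr' : List Default, IsProcess D W Pr' →
      IsProcess (simD D W N u δ C F) (simW W N) (Aux.SimPr D W N u δ C F Pr') ∧
      LocallySuccessful (simW W N) (Aux.SimPr D W N u δ C F Pr') ∧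
      ReiterClosed (simD D W N u δ C F) (simW W N) (Aux.SimPr D W N u δ C F Pr') ∧
      Omap D N u (Aux.SimPr D W N u δ C F Pr') = Pr' := by
    intro Pr' hPr'
    have hip := Aux.SimPr_isProcess D W N u δ C F Pr' hD hv ht hF hPr'
    exact ⟨hip, Aux.SimPr_locSucc D W N u δ C F Pr' hip.2.2.1,
      Aux.SimPr_closed D W N u δ C F Pr' hD hv ht hF hPr',
      Aux.Omap_SimPr D W N u δ C F Pr' hF hPr'.2.1⟩
  constructor
  · intro Pr' hPr'
    obtain ⟨h1, h2, h3, h4⟩ := main Pr' hPr'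
    exact ⟨_, h1, h2, h3, h4⟩
  · intro E hE
    obtain ⟨Pr', hPr', hS, hC, rfl⟩ := hE
    have hz : circHolds C (Aux.oB D δ Pr') (memOf D Pr') := (hrep Pr' hPr').1 ⟨hS, hC⟩
    obtain ⟨h1, h2, h3, h4⟩ := main Pr' hPr'
    refine ⟨Cn (procTh (simW W N) (Aux.SimPr D W N u δ C F Pr')),
      ⟨_, h1, h2, h3, rfl⟩, ?_⟩
    intro φ hφ
    have hφ' : ∀ k ∈ φ.vars, k < N := fun k hk => Finset.mem_range.1 (hφ hk)
    rw [entails_Cn, entails_Cn]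
    exact Aux.varequiv_SimPr D W N u δ C F Pr' hD hv ht hF hPr' hz hφ'

end DLogic
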